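/- arXiv:0805.2729 — 10 statements merged into one kernel-verified Lean document; each statement's English description precedes it below -/
import Mathlib

section
/- Let n ≥ 3, 1 ≤ i ≤ n-1, 0 ≤ t ≤ n-1 with i + t ≤ n. The set A = {α ∈ ℕ^n : |α| = n and α_{t+1} + ... + α_{t+i} ≤ i+1} is closed under the property that its ℝ≥0-cone equals {y ∈ ℝ^n : y_k ≥ 0 for all k, and (i+1)·(Σ_{k≤t} y_k + Σ_{k>t+i} y_k) − (n−i−1)·Σ_{k=t+1}^{t+i} y_k ≥ 0}. -/
open scoped NNReal

/-!
On an exponent `α` of degree `d` the balance form `b · |α_{Sᶜ}| - (d - b) · |α_S|` equals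
`d · (b - |α_S|) ≥ 0`, so the exponent cone lies in the balance cone. Conversely, for `b < d`,
the vectors `d • e_k` (`k ∉ S`) and `b • e_j + (d - b) • e_k` (`j ∈ S`, `k ∉ S`) are
exponents. A vector `y ≥ 0` whose `Sᶜ`-mass `B` is positive splits as
`∑_{k ∉ S} (y_k / B) • (y_S + B • e_k)`, and `balance y ≥ 0` is exactly what makes each
`y_S + B • e_k` a nonnegative combination of those exponents. For `d ≤ b` every `d • e_k`
is an exponent and both cones are the orthant.
-/

open Finset

theorem Submodule.smul_mem_of_nonneg {M : Type*} [AddCommMonoid M] [Module ℝ M]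
    (p : Submodule ℝ≥0 M) {c : ℝ} (hc : 0 ≤ c) {x : M} (hx : x ∈ p) : c • x ∈ p :=
  p.smul_mem ⟨c, hc⟩ hx

namespace BoundedExponents

variable {ι : Type*} [Fintype ι]

def exponents (S : Finset ι) (d b : ℕ) : Set (ι → ℕ) :=
  {α | ∑ k, α k = d ∧ ∑ k ∈ S, α k ≤ b}

def exponentCone (S : Finset ι) (d b : ℕ) : Submodule ℝ≥0 (ι → ℝ) :=
  Submodule.span ℝ≥0 ((fun (α : ι → ℕ) (k : ι) => (α k : ℝ)) '' exponents S d b)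

theorem natCast_mem_exponentCone {S : Finset ι} {d b : ℕ} {α : ι → ℕ}
    (hα : α ∈ exponents S d b) : (fun k => (α k : ℝ)) ∈ exponentCone S d b :=
  Submodule.subset_span ⟨α, hα, rfl⟩

variable [DecidableEq ι]

def balance (S : Finset ι) (d b : ℕ) : (ι → ℝ) →ₗ[ℝ] ℝ where
  toFun y := b * ∑ k ∈ Sᶜ, y k - (d - b) * ∑ k ∈ S, y k
  map_add' x y := by simp only [Pi.add_apply, sum_add_distrib]; ring
  map_smul' c y := by simp only [Pi.smul_apply, smul_eq_mul, ← mul_sum, RingHom.id_apply]; ring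

theorem balance_apply (S : Finset ι) (d b : ℕ) (y : ι → ℝ) :
    balance S d b y = b * ∑ k ∈ Sᶜ, y k - (d - b) * ∑ k ∈ S, y k := rfl

def balanceCone (S : Finset ι) (d b : ℕ) : Submodule ℝ≥0 (ι → ℝ) where
  carrier := {y | 0 ≤ y ∧ 0 ≤ balance S d b y}
  add_mem' hx hy := ⟨add_nonneg hx.1 hy.1, by rw [map_add]; exact add_nonneg hx.2 hy.2⟩
  zero_mem' := ⟨le_rfl, by rw [map_zero]⟩
  smul_mem' c _ hy :=
    ⟨smul_nonneg c.2 hy.1, by rw [LinearMap.map_smul_of_tower]; exact smul_nonneg c.2 hy.2⟩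

theorem mem_balanceCone {S : Finset ι} {d b : ℕ} {y : ι → ℝ} :
    y ∈ balanceCone S d b ↔ 0 ≤ y ∧ 0 ≤ balance S d b y := Iff.rfl

theorem balance_natCast {S : Finset ι} {d b : ℕ} {α : ι → ℕ} (hα : ∑ k, α k = d) :
    balance S d b (fun k => (α k : ℝ)) = d * (b - ∑ k ∈ S, (α k : ℝ)) := by
  have hsum : ∑ k ∈ Sᶜ, (α k : ℝ) + ∑ k ∈ S, (α k : ℝ) = d := by
    rw [sum_compl_add_sum]; exact_mod_cast hα
  rw [balance_apply, ← sub_eq_of_eq_add' hsum.symm]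
  ring

theorem exponentCone_le_balanceCone (S : Finset ι) (d b : ℕ) :
    exponentCone S d b ≤ balanceCone S d b := by
  refine Submodule.span_le.2 ?_
  rintro _ ⟨α, ⟨hα, hαS⟩, rfl⟩
  refine ⟨fun k => Nat.cast_nonneg _, ?_⟩
  rw [balance_natCast hα]
  have : ∑ k ∈ S, (α k : ℝ) ≤ b := by exact_mod_cast hαS
  nlinarith

theorem smul_single_mem_exponentCone {S : Finset ι} {d b : ℕ} {k : ι} (hk : k ∉ S ∨ d ≤ b) :
    (d : ℝ) • Pi.single k (1 : ℝ) ∈ exponentCone S d b := by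
  convert natCast_mem_exponentCone (α := Pi.single k d) ⟨?_, ?_⟩ using 1
  · ext m; by_cases h : m = k <;> simp [h]
  · simp
  · rw [sum_pi_single']
    split_ifs with h
    exacts [hk.resolve_left (not_not_intro h), b.zero_le]

theorem smul_single_add_smul_single_mem_exponentCone {S : Finset ι} {d b : ℕ} {j k : ι}
    (hj : j ∈ S) (hk : k ∉ S) (hbd : b ≤ d) :
    (b : ℝ) • Pi.single j (1 : ℝ) + ((d : ℝ) - b) • Pi.single k 1 ∈ exponentCone S d b := by
  have hjk : j ≠ k := by rintro rfl; exact hk hj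
  convert natCast_mem_exponentCone (α := Pi.single j b + Pi.single k (d - b)) ⟨?_, ?_⟩ using 1
  · ext m
    by_cases h : m = j
    · subst h; simp [hjk]
    · by_cases h' : m = k
      · subst h'; simp [h, Nat.cast_sub hbd]
      · simp [h, h']
  · simp [sum_add_distrib]; omega
  · simp [sum_add_distrib, sum_pi_single', hj, hk]

theorem mem_exponentCone_of_nonneg {S : Finset ι} {d b : ℕ} (hd : 0 < d) (hdb : d ≤ b)
    {y : ι → ℝ} (hy : 0 ≤ y) : y ∈ exponentCone S d b := by
  have hy_eq : y = ∑ k, (y k / d) • ((d : ℝ) • Pi.single k (1 : ℝ)) := by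
    conv_lhs => rw [← univ_sum_single y]
    refine sum_congr rfl fun k _ => ?_
    rw [smul_smul, div_mul_cancel₀ _ (by positivity), ← Pi.single_smul, smul_eq_mul, mul_one]
  rw [hy_eq]
  exact Submodule.sum_mem _ fun k _ => Submodule.smul_mem_of_nonneg _
    (div_nonneg (hy k) d.cast_nonneg) (smul_single_mem_exponentCone (Or.inr hdb))

theorem sum_smul_single_add_smul_single_mem_exponentCone {S : Finset ι} {d b : ℕ}
    (hb : 0 < b) (hbd : b ≤ d) {y : ι → ℝ} (hy : 0 ≤ y) {k : ι} (hk : k ∉ S) {c : ℝ}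
    (hc : (d - b) * ∑ j ∈ S, y j ≤ b * c) :
    ∑ j ∈ S, y j • Pi.single j (1 : ℝ) + c • Pi.single k 1 ∈ exponentCone S d b := by
  have hb' : (0 : ℝ) < b := by exact_mod_cast hb
  have hd' : (0 : ℝ) < d := by exact_mod_cast hb.trans_le hbd
  set r := (b * c - (d - b) * ∑ j ∈ S, y j) / (b * d)
  have hr : 0 ≤ r := div_nonneg (by linarith) (by positivity)
  have h_eq : ∑ j ∈ S, y j • Pi.single j (1 : ℝ) + c • Pi.single k 1 =
      ∑ j ∈ S, (y j / b) • ((b : ℝ) • Pi.single j (1 : ℝ) + ((d : ℝ) - b) • Pi.single k 1)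
        + r • ((d : ℝ) • Pi.single k (1 : ℝ)) := by
    simp only [smul_add, smul_smul, sum_add_distrib, ← sum_smul, add_assoc, ← add_smul]
    congr 1
    · exact sum_congr rfl fun j _ => by rw [div_mul_cancel₀ _ hb'.ne']
    · congr 1
      simp only [r, ← sum_div, ← sum_mul]
      field_simp
      ring
  rw [h_eq]
  refine Submodule.add_mem _ (Submodule.sum_mem _ fun j hj => ?_) ?_
  · exact Submodule.smul_mem_of_nonneg _ (div_nonneg (hy j) hb'.le)
      (smul_single_add_smul_single_mem_exponentCone hj hk hbd)
  · exact Submodule.smul_mem_of_nonneg _ hr (smul_single_mem_exponentCone (Or.inl hk))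

theorem balanceCone_le_exponentCone (S : Finset ι) {d b : ℕ} (hd : 0 < d) (hb : 0 < b) :
    balanceCone S d b ≤ exponentCone S d b := by
  rintro y ⟨hy, hbal⟩
  rcases le_or_gt d b with hdb | hbd
  · exact mem_exponentCone_of_nonneg hd hdb hy
  rw [balance_apply] at hbal
  have hbd' : (b : ℝ) < d := by exact_mod_cast hbd
  set B := ∑ k ∈ Sᶜ, y k
  have hB : 0 ≤ B := sum_nonneg fun k _ => hy k
  have hs : 0 ≤ ∑ j ∈ S, y j := sum_nonneg fun j _ => hy j
  rcases hB.eq_or_lt with hB0 | hBpos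
  · have hs0 : ∑ j ∈ S, y j = 0 := by nlinarith
    have hy0 : y = 0 := funext fun k =>
      (sum_eq_zero_iff_of_nonneg fun k _ => hy k).1
        (by rw [← sum_add_sum_compl S, hs0, zero_add]; exact hB0.symm) k (mem_univ k)
    rw [hy0]
    exact zero_mem _
  have hy_eq : y = ∑ k ∈ Sᶜ, (y k / B) •
      (∑ j ∈ S, y j • Pi.single j (1 : ℝ) + B • Pi.single k 1) := by
    simp only [smul_add, sum_add_distrib, ← sum_smul, ← sum_div,
      div_mul_cancel₀ _ hBpos.ne', ← Pi.single_smul, smul_eq_mul, mul_one]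
    rw [div_self hBpos.ne', one_smul, sum_add_sum_compl, univ_sum_single]
  rw [hy_eq]
  exact Submodule.sum_mem _ fun k hk => Submodule.smul_mem_of_nonneg _
    (div_nonneg (hy k) hB)
    (sum_smul_single_add_smul_single_mem_exponentCone hb hbd.le hy (mem_compl.1 hk) (by linarith))

theorem exponentCone_eq_balanceCone (S : Finset ι) {d b : ℕ} (hd : 0 < d) (hb : 0 < b) :
    exponentCone S d b = balanceCone S d b :=
  le_antisymm (exponentCone_le_balanceCone S d b) (balanceCone_le_exponentCone S hd hb)

end BoundedExponents

open BoundedExponents in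
theorem stmt0_general (n i t : ℕ) (hn : 3 ≤ n) :
    (Submodule.span ℝ≥0
        ((fun (α : Fin n → ℕ) (k : Fin n) => (α k : ℝ)) ''
          {α : Fin n → ℕ | ∑ k, α k = n ∧
            ∑ k ∈ Finset.univ.filter (fun m : Fin n => t ≤ m.val ∧ m.val < t + i), α k ≤ i + 1}) :
      Set (Fin n → ℝ)) =
    {y : Fin n → ℝ | (∀ k, 0 ≤ y k) ∧
      0 ≤ (i + 1 : ℝ) *
            (∑ k ∈ Finset.univ.filter (fun m : Fin n => ¬(t ≤ m.val ∧ m.val < t + i)), y k)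
          - ((n : ℝ) - i - 1) *
            (∑ k ∈ Finset.univ.filter (fun m : Fin n => t ≤ m.val ∧ m.val < t + i), y k)} := by
  refine (congrArg SetLike.coe (exponentCone_eq_balanceCone
    (Finset.univ.filter fun m : Fin n => t ≤ m.val ∧ m.val < t + i) (by omega) i.succ_pos)).trans ?_
  ext y
  simp only [SetLike.mem_coe, mem_balanceCone, balance_apply, Pi.le_def, Pi.zero_apply,
    compl_filter, Set.mem_ofPred_eq]
  push_cast [sub_sub]
  rfl

theorem stmt0 (n i t : ℕ) (hn : 3 ≤ n) (hi1 : 1 ≤ i) (hi2 : i ≤ n - 1)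
    (ht : t ≤ n - 1) (hit : i + t ≤ n) :
    (Submodule.span ℝ≥0
        ((fun (α : Fin n → ℕ) (k : Fin n) => (α k : ℝ)) ''
          {α : Fin n → ℕ | ∑ k, α k = n ∧
            ∑ k ∈ Finset.univ.filter (fun m : Fin n => t ≤ m.val ∧ m.val < t + i), α k ≤ i + 1}) :
      Set (Fin n → ℝ)) =
    {y : Fin n → ℝ | (∀ k, 0 ≤ y k) ∧
      0 ≤ (i + 1 : ℝ) *
            (∑ k ∈ Finset.univ.filter (fun m : Fin n => ¬(t ≤ m.val ∧ m.val < t + i)), y k)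
          - ((n : ℝ) - i - 1) *
            (∑ k ∈ Finset.univ.filter (fun m : Fin n => t ≤ m.val ∧ m.val < t + i), y k)} :=
  stmt0_general n i t hn
end

section
/- Let n = 4 and A = {α ∈ ℕ^4 : |α| = 4, α_1 + α_2 ≤ 3}, B = {α ∈ ℕ^4 : |α| = 4, α_2 + α_3 ≤ 3}. Then there is no choice of subsets C_1, C_2, C_3, C_4 ⊆ {1,2,3,4} such that A ∩ B = {e_{j_1} + e_{j_2} + e_{j_3} + e_{j_4} : j_k ∈ C_k for k = 1,...,4}. -/
set_option maxRecDepth 100000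
set_option maxHeartbeats 1000000

open Classical in
theorem stmt5 :
    ¬ ∃ C : Fin 4 → Set (Fin 4),
      ({α : Fin 4 → ℕ | ∑ k, α k = 4 ∧ α 0 + α 1 ≤ 3} ∩
       {α : Fin 4 → ℕ | ∑ k, α k = 4 ∧ α 1 + α 2 ≤ 3}) =
      {α : Fin 4 → ℕ | ∃ j : Fin 4 → Fin 4, (∀ k, j k ∈ C k) ∧
        α = ∑ k, Pi.single (j k) 1} := by
  -- decidable auxiliary facts
  have key0 : ∀ j : Fin 4 → Fin 4, (![3,0,0,1] : Fin 4 → ℕ) = ∑ k, Pi.single (j k) 1 →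
      ∃ s, ∀ k, k ≠ s → j k = 0 := by decide
  have key1 : ∀ j : Fin 4 → Fin 4, (![0,3,0,1] : Fin 4 → ℕ) = ∑ k, Pi.single (j k) 1 →
      ∃ s, ∀ k, k ≠ s → j k = 1 := by decide
  have key2 : ∀ j : Fin 4 → Fin 4, (![0,0,3,1] : Fin 4 → ℕ) = ∑ k, Pi.single (j k) 1 →
      ∃ s, ∀ k, k ≠ s → j k = 2 := by decide
  have key6 : ∀ j : Fin 4 → Fin 4, (![2,0,2,0] : Fin 4 → ℕ) = ∑ k, Pi.single (j k) 1 →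
      ∀ k, j k = 0 ∨ j k = 2 := by decide
  have keyA : ∀ j : Fin 4 → Fin 4, (∀ k, j k = 0 ∨ j k = 1) →
      ¬ ((∑ k, Pi.single (j k) 1 : Fin 4 → ℕ) 0 + (∑ k, Pi.single (j k) 1 : Fin 4 → ℕ) 1 ≤ 3) := by
    decide
  have keyB : ∀ j : Fin 4 → Fin 4, (∀ k, j k = 1 ∨ j k = 2) →
      ¬ ((∑ k, Pi.single (j k) 1 : Fin 4 → ℕ) 1 + (∑ k, Pi.single (j k) 1 : Fin 4 → ℕ) 2 ≤ 3) := by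
    decide
  rintro ⟨C, hC⟩
  -- extract witnesses from membership of test vectors in the LHS
  have hget : ∀ v : Fin 4 → ℕ, (∑ k, v k = 4 ∧ v 0 + v 1 ≤ 3) → (∑ k, v k = 4 ∧ v 1 + v 2 ≤ 3) →
      ∃ j : Fin 4 → Fin 4, (∀ k, j k ∈ C k) ∧ v = ∑ k, Pi.single (j k) 1 := by
    intro v h1 h2
    have : v ∈ ({α : Fin 4 → ℕ | ∃ j : Fin 4 → Fin 4, (∀ k, j k ∈ C k) ∧
        α = ∑ k, Pi.single (j k) 1}) := hC ▸ ⟨h1, h2⟩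
    exact this
  obtain ⟨j0, hj0C, hj0⟩ := hget ![3,0,0,1] (by decide) (by decide)
  obtain ⟨j1, hj1C, hj1⟩ := hget ![0,3,0,1] (by decide) (by decide)
  obtain ⟨j2, hj2C, hj2⟩ := hget ![0,0,3,1] (by decide) (by decide)
  obtain ⟨s0, hs0⟩ := key0 j0 hj0
  obtain ⟨s1, hs1⟩ := key1 j1 hj1
  obtain ⟨s2, hs2⟩ := key2 j2 hj2
  have h0 : ∀ k, k ≠ s0 → (0 : Fin 4) ∈ C k := fun k hk => hs0 k hk ▸ hj0C k
  have h1 : ∀ k, k ≠ s1 → (1 : Fin 4) ∈ C k := fun k hk => hs1 k hk ▸ hj1C k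
  have h2 : ∀ k, k ≠ s2 → (2 : Fin 4) ∈ C k := fun k hk => hs2 k hk ▸ hj2C k
  -- the reverse inclusion: any admissible j yields a vector in the LHS
  have hmem : ∀ j : Fin 4 → Fin 4, (∀ k, j k ∈ C k) →
      ((∑ k, Pi.single (j k) 1 : Fin 4 → ℕ) 0 + (∑ k, Pi.single (j k) 1 : Fin 4 → ℕ) 1 ≤ 3)
      ∧ ((∑ k, Pi.single (j k) 1 : Fin 4 → ℕ) 1 + (∑ k, Pi.single (j k) 1 : Fin 4 → ℕ) 2 ≤ 3) := by
    intro j hj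
    have : (∑ k, Pi.single (j k) 1 : Fin 4 → ℕ) ∈
        ({α : Fin 4 → ℕ | ∑ k, α k = 4 ∧ α 0 + α 1 ≤ 3} ∩
         {α : Fin 4 → ℕ | ∑ k, α k = 4 ∧ α 1 + α 2 ≤ 3}) := by
      rw [hC]; exact ⟨j, hj, rfl⟩
    exact ⟨this.1.2, this.2.2⟩
  -- there is some index containing neither 0 nor 1
  have hA : ∃ k, (0 : Fin 4) ∉ C k ∧ (1 : Fin 4) ∉ C k := by
    by_contra h
    push_neg at h
    set j : Fin 4 → Fin 4 := fun k => if (0 : Fin 4) ∈ C k then 0 else 1 with hjdef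
    have hjC : ∀ k, j k ∈ C k := by
      intro k
      by_cases hk : (0 : Fin 4) ∈ C k
      · simp only [hjdef, if_pos hk]; exact hk
      · simp only [hjdef, if_neg hk]; exact h k hk
    exact keyA j (fun k => by by_cases hk : (0 : Fin 4) ∈ C k <;>
      simp [hjdef, hk]) (hmem j hjC).1
  -- there is some index containing neither 1 nor 2
  have hB : ∃ k, (1 : Fin 4) ∉ C k ∧ (2 : Fin 4) ∉ C k := by
    by_contra h
    push_neg at h
    set j : Fin 4 → Fin 4 := fun k => if (1 : Fin 4) ∈ C k then 1 else 2 with hjdef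
    have hjC : ∀ k, j k ∈ C k := by
      intro k
      by_cases hk : (1 : Fin 4) ∈ C k
      · simp only [hjdef, if_pos hk]; exact hk
      · simp only [hjdef, if_neg hk]; exact h k hk
    exact keyB j (fun k => by by_cases hk : (1 : Fin 4) ∈ C k <;>
      simp [hjdef, hk]) (hmem j hjC).2
  obtain ⟨a, ha0, ha1⟩ := hA
  obtain ⟨b, hb1, hb2⟩ := hB
  have has0 : a = s0 := by by_contra h; exact ha0 (h0 a h)
  have has1 : a = s1 := by by_contra h; exact ha1 (h1 a h)
  have hbs1 : b = s1 := by by_contra h; exact hb1 (h1 b h)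
  have hab : a = b := by rw [has1, hbs1]
  -- now a contains neither 0 nor 2; contradict membership of (2,0,2,0)
  obtain ⟨j6, hj6C, hj6⟩ := hget ![2,0,2,0] (by decide) (by decide)
  rcases key6 j6 hj6 a with h | h
  · exact ha0 (h ▸ hj6C a)
  · exact (hab ▸ hb2) (h ▸ hj6C a)
end

section
/- Let n ≥ 3, 2 ≤ i_1 ≤ n−2, 1 ≤ t_2 ≤ i_1 − 1, 1 ≤ i_2 ≤ n−2 with i_2 + t_2 ≤ i_1. Define C_1 = ... = C_{i_2} = C_n = [n], C_{i_2+1} = ... = C_{i_1} = [n] \ {t_2+1,...,t_2+i_2}, C_{i_1+1} = ... = C_{n−1} = [n] \ [i_1]. Then {Σ_{k=1}^n e_{j_k} : j_k ∈ C_k} = {α ∈ ℕ^n : |α| = n, α_1 + ... + α_{i_1} ≤ i_1 + 1, α_{t_2+1} + ... + α_{t_2+i_2} ≤ i_2 + 1}. -/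
/-!
Inclusion `⊆`: only the `i₁ + 1` rows `C_1, …, C_{i₁}, C_n` meet `[i₁]`, and only the `i₂ + 1`
full rows meet the window `{t₂+1, …, t₂+i₂}`.

Inclusion `⊇`: by Hall's theorem, applied with each `m` repeated `α_m` times, `α` is a sum of
transversal basis vectors once every set `s` of rows satisfies `|s| ≤ Σ_{m ∈ ⋃_{k ∈ s} C_k} α_m`.
Ranking the rows by level (full rows, then `C_{i₂+1}, …, C_{i₁}`, then the rest), the rows of `s`
lie at or below the level of one of its members `k`, so it suffices that the number of rows at or
below each level is at most the mass `Σ_{m ∈ C_k} α_m`; for the three levels these are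
`|α| = n`, `α_{t₂+1} + ⋯ + α_{t₂+i₂} ≤ i₂ + 1` and `α_1 + ⋯ + α_{i₁} ≤ i₁ + 1`.
-/

open Finset

section Transversal

variable {ι β : Type*} [Fintype ι] [DecidableEq β]

theorem sum_filter_sum_single_apply [Fintype β] (j : ι → β) (p : β → Prop) [DecidablePred p] :
    ∑ m ∈ univ.filter p, (∑ k, Pi.single (j k) 1 : β → ℕ) m = #(univ.filter fun k => p (j k)) := by
  simp only [Finset.sum_apply]
  rw [sum_comm, card_filter]
  simp only [sum_pi_single', mem_filter, mem_univ, true_and]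

theorem sum_sum_single_apply [Fintype β] (j : ι → β) :
    ∑ m, (∑ k, Pi.single (j k) 1 : β → ℕ) m = Fintype.card ι := by
  simpa using sum_filter_sum_single_apply j (fun _ => True)

theorem sum_single_apply_eq_card (j : ι → β) (m : β) :
    (∑ k, Pi.single (j k) 1 : β → ℕ) m = #(univ.filter fun k => j k = m) := by
  simp only [Finset.sum_apply, card_filter]
  exact sum_congr rfl fun k _ => by simp only [Pi.single_apply, eq_comm]

theorem exists_eq_sum_single_of_hall [Fintype β] (D : ι → Finset β) (a : β → ℕ)
    (hsum : ∑ m, a m = Fintype.card ι)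
    (hall : ∀ s : Finset ι, #s ≤ ∑ m ∈ s.biUnion D, a m) :
    ∃ j : ι → β, (∀ k, j k ∈ D k) ∧ a = ∑ k, Pi.single (j k) 1 := by
  let copies : Finset β → Finset (Σ _ : β, ℕ) := fun S => S.sigma fun m => range (a m)
  have hcopies (S : Finset β) : #(copies S) = ∑ m ∈ S, a m := by simp [copies]
  obtain ⟨f, hf_inj, hf_mem⟩ :=
    (all_card_le_biUnion_card_iff_exists_injective fun k => copies (D k)).mp fun s => by
      refine (hcopies _ ▸ hall s).trans (card_le_card ?_)
      intro ⟨m, c⟩ hmc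
      simp only [copies, mem_sigma, mem_biUnion] at hmc ⊢
      obtain ⟨⟨k, hk, hm⟩, hc⟩ := hmc
      exact ⟨k, hk, hm, hc⟩
  let j k := (f k).1
  have hj_mem k : j k ∈ D k := (mem_sigma.mp (hf_mem k)).1
  have hfiber_le m : (∑ k, Pi.single (j k) 1 : β → ℕ) m ≤ a m := by
    rw [sum_single_apply_eq_card, ← sum_singleton a m, ← hcopies]
    refine card_le_card_of_injOn f (fun k hk => ?_) hf_inj.injOn
    exact mem_sigma.mpr ⟨mem_singleton.mpr (mem_filter.mp hk).2, (mem_sigma.mp (hf_mem k)).2⟩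
  have hsum_eq : ∑ m, (∑ k, Pi.single (j k) 1 : β → ℕ) m = ∑ m, a m := by
    rw [sum_sum_single_apply, hsum]
  refine ⟨j, hj_mem, funext fun m => ?_⟩
  exact ((sum_eq_sum_iff_of_le fun m _ => hfiber_le m).mp hsum_eq m (mem_univ m)).symm

theorem card_le_sum_biUnion_of_rank {γ : Type*} [LinearOrder γ] (D : ι → Finset β) (a : β → ℕ)
    (r : ι → γ)
    (hlow : ∀ k, #(univ.filter fun k' => r k' ≤ r k) ≤ ∑ m ∈ D k, a m) (s : Finset ι) :
    #s ≤ ∑ m ∈ s.biUnion D, a m := by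
  rcases s.eq_empty_or_nonempty with rfl | hs
  · simp
  obtain ⟨k, hk, hmax⟩ := s.exists_max_image r hs
  calc #s ≤ #(univ.filter fun k' => r k' ≤ r k) :=
        card_le_card fun k' hk' => mem_filter.mpr ⟨mem_univ _, hmax k' hk'⟩
    _ ≤ ∑ m ∈ D k, a m := hlow k
    _ ≤ ∑ m ∈ s.biUnion D, a m := sum_le_sum_of_subset (subset_biUnion_of_mem D hk)

end Transversal

section Levels

variable {n : ℕ}

theorem card_filter_lt_or_eq_last_le (a : ℕ) :
    #(univ.filter fun k : Fin n => k.val < a ∨ k.val = n - 1) ≤ a + 1 := by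
  calc #(univ.filter fun k : Fin n => k.val < a ∨ k.val = n - 1)
      ≤ #(insert (n - 1) (range a)) :=
        card_le_card_of_injOn Fin.val (fun k hk => by simp at hk ⊢; omega)
          Fin.val_injective.injOn
    _ ≤ a + 1 := by simpa using card_insert_le (n - 1) (range a)

theorem card_filter_not_lt_or_eq_last_le (a : ℕ) :
    #(univ.filter fun k : Fin n => ¬(k.val < a ∨ k.val = n - 1)) ≤ n - (a + 1) := by
  calc #(univ.filter fun k : Fin n => ¬(k.val < a ∨ k.val = n - 1))
      ≤ #(Ico a (n - 1)) :=
        card_le_card_of_injOn Fin.val (fun k hk => by simp at hk ⊢; omega)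
          Fin.val_injective.injOn
    _ = n - (a + 1) := by simp; omega

/-- With rows `0, …, n - 1`, level `2` holds the full rows `C_1 = ⋯ = C_{i₂} = C_n`, level `1`
the rows `C_{i₂+1}, …, C_{i₁}` and level `0` the rows `C_{i₁+1}, …, C_{n-1}`. -/
def rowLevel (i1 i2 : ℕ) (k : Fin n) : ℕ :=
  if k.val < i2 ∨ k.val = n - 1 then 2 else if k.val < i1 then 1 else 0

def levelSet (i1 i2 t2 : ℕ) : ℕ → Finset (Fin n)
  | 0 => univ.filter fun m => ¬m.val < i1
  | 1 => univ.filter fun m => ¬(t2 ≤ m.val ∧ m.val < t2 + i2)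
  | _ => univ

variable {i1 i2 t2 : ℕ}

theorem lt_or_eq_last_of_mem_levelSet (h : i2 ≤ i1) {k m : Fin n}
    (hm : m ∈ levelSet i1 i2 t2 (rowLevel i1 i2 k)) (hm1 : m.val < i1) :
    k.val < i1 ∨ k.val = n - 1 := by
  unfold rowLevel at hm
  split_ifs at hm <;> simp_all [levelSet] <;> omega

theorem lt_or_eq_last_of_mem_levelSet_window (h : t2 + i2 ≤ i1) {k m : Fin n}
    (hm : m ∈ levelSet i1 i2 t2 (rowLevel i1 i2 k)) (hm2 : t2 ≤ m.val ∧ m.val < t2 + i2) :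
    k.val < i2 ∨ k.val = n - 1 := by
  unfold rowLevel at hm
  split_ifs at hm <;> simp_all [levelSet] <;> omega

theorem card_rowLevel_le_le_sum_levelSet {α : Fin n → ℕ} (hs : ∑ m, α m = n)
    (hlow : ∑ m ∈ univ.filter fun m : Fin n => m.val < i1, α m ≤ i1 + 1)
    (hwin : ∑ m ∈ univ.filter fun m : Fin n => t2 ≤ m.val ∧ m.val < t2 + i2, α m ≤ i2 + 1) :
    ∀ r, #(univ.filter fun k : Fin n => rowLevel i1 i2 k ≤ r) ≤ ∑ m ∈ levelSet i1 i2 t2 r, α m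
  | 0 => by
    have hsplit := sum_filter_add_sum_filter_not univ (fun m : Fin n => m.val < i1) α
    calc #(univ.filter fun k : Fin n => rowLevel i1 i2 k ≤ 0)
        ≤ #(univ.filter fun k : Fin n => ¬(k.val < i1 ∨ k.val = n - 1)) :=
          card_le_card <| monotone_filter_right _ fun k _ hk => by
            unfold rowLevel at hk; split_ifs at hk <;> omega
      _ ≤ n - (i1 + 1) := card_filter_not_lt_or_eq_last_le i1
      _ ≤ ∑ m ∈ levelSet i1 i2 t2 0, α m := by simp only [levelSet]; omega
  | 1 => by
    have hsplit := sum_filter_add_sum_filter_not univ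
      (fun m : Fin n => t2 ≤ m.val ∧ m.val < t2 + i2) α
    calc #(univ.filter fun k : Fin n => rowLevel i1 i2 k ≤ 1)
        ≤ #(univ.filter fun k : Fin n => ¬(k.val < i2 ∨ k.val = n - 1)) :=
          card_le_card <| monotone_filter_right _ fun k _ hk => by
            unfold rowLevel at hk; split_ifs at hk <;> omega
      _ ≤ n - (i2 + 1) := card_filter_not_lt_or_eq_last_le i2
      _ ≤ ∑ m ∈ levelSet i1 i2 t2 1, α m := by simp only [levelSet]; omega
  | _ + 2 => by
    simpa [levelSet, hs] using card_le_univ (univ.filter fun k : Fin n => rowLevel i1 i2 k ≤ _)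

end Levels

theorem stmt6_general (n i1 i2 t2 : ℕ)
    (hsum : i2 + t2 ≤ i1)
    (C : Fin n → Set (Fin n))
    (hC : ∀ k : Fin n,
      C k = if k.val < i2 ∨ k.val = n - 1 then (Set.univ : Set (Fin n))
            else if k.val < i1 then {m : Fin n | ¬ (t2 ≤ m.val ∧ m.val < t2 + i2)}
            else {m : Fin n | i1 ≤ m.val}) :
    {α : Fin n → ℕ | ∃ j : Fin n → Fin n, (∀ k, j k ∈ C k) ∧ α = ∑ k, Pi.single (j k) 1} =
    {α : Fin n → ℕ | ∑ k, α k = n ∧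
      ∑ k ∈ Finset.univ.filter (fun m : Fin n => m.val < i1), α k ≤ i1 + 1 ∧
      ∑ k ∈ Finset.univ.filter (fun m : Fin n => t2 ≤ m.val ∧ m.val < t2 + i2), α k ≤ i2 + 1} := by
  have hC_eq k : C k = (levelSet i1 i2 t2 (rowLevel i1 i2 k) : Finset (Fin n)) := by
    rw [hC k]; unfold rowLevel; split_ifs <;> ext <;> simp [levelSet]
  ext α
  simp only [hC_eq, mem_coe, Set.mem_ofPred_eq]
  constructor
  · rintro ⟨j, hj, rfl⟩
    refine ⟨by rw [sum_sum_single_apply, Fintype.card_fin], ?_, ?_⟩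
    · rw [sum_filter_sum_single_apply]
      exact (card_le_card <| monotone_filter_right _ fun k _ hk =>
        lt_or_eq_last_of_mem_levelSet (by omega) (hj k) hk).trans (card_filter_lt_or_eq_last_le i1)
    · rw [sum_filter_sum_single_apply]
      exact (card_le_card <| monotone_filter_right _ fun k _ hk =>
        lt_or_eq_last_of_mem_levelSet_window (by omega) (hj k) hk).trans
          (card_filter_lt_or_eq_last_le i2)
  · rintro ⟨hs, hlow, hwin⟩
    exact exists_eq_sum_single_of_hall _ α (by simpa using hs) <|
      card_le_sum_biUnion_of_rank _ α (rowLevel i1 i2) fun k =>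
        card_rowLevel_le_le_sum_levelSet hs hlow hwin _

theorem stmt6 (n i1 i2 t2 : ℕ) (hn : 3 ≤ n) (hi1a : 2 ≤ i1) (hi1b : i1 ≤ n - 2)
    (ht2a : 1 ≤ t2) (ht2b : t2 ≤ i1 - 1) (hi2a : 1 ≤ i2) (hi2b : i2 ≤ n - 2)
    (hsum : i2 + t2 ≤ i1)
    (C : Fin n → Set (Fin n))
    (hC : ∀ k : Fin n,
      C k = if k.val < i2 ∨ k.val = n - 1 then (Set.univ : Set (Fin n))
            else if k.val < i1 then {m : Fin n | ¬ (t2 ≤ m.val ∧ m.val < t2 + i2)}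
            else {m : Fin n | i1 ≤ m.val}) :
    {α : Fin n → ℕ | ∃ j : Fin n → Fin n, (∀ k, j k ∈ C k) ∧ α = ∑ k, Pi.single (j k) 1} =
    {α : Fin n → ℕ | ∑ k, α k = n ∧
      ∑ k ∈ Finset.univ.filter (fun m : Fin n => m.val < i1), α k ≤ i1 + 1 ∧
      ∑ k ∈ Finset.univ.filter (fun m : Fin n => t2 ≤ m.val ∧ m.val < t2 + i2), α k ≤ i2 + 1} :=
  stmt6_general n i1 i2 t2 hsum C hC
end

section
/- Let n ≥ 3, 2 ≤ i_1 ≤ n−2, n − i_2 ≤ t_2 ≤ i_1 − 1 (so i_2 + t_2 > n and n − t_2 ≤ i_2 ≤ n−2). Define C_1 = ... = C_{n−i_2−1} = [n] \ ({t_2+1,...,n} ∪ {1,...,i_2+t_2−n}), C_{n−i_2} = ... = C_{i_1} = C_n = [n], C_{i_1+1} = ... = C_{n−1} = [n] \ [i_1]. Then {Σ_{k=1}^n e_{j_k} : j_k ∈ C_k} = {α ∈ ℕ^n : |α| = n, α_1 + ... + α_{i_1} ≤ i_1 + 1, Σ_{k=1}^{i_2+t_2−n} α_k + Σ_{k=t_2+1}^{n}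 α_k ≤ i_2 + 1}. -/
/-!
By Hall's marriage theorem, applied to the slots `k` and the tokens `⟨m, i⟩` with `i < α m`,
a vector `α` is the count vector of a transversal of `C` iff `|α|` is the number of slots and
`#{k | C k ⊆ Y} ≤ α(Y)` for every `Y`. Here each `C k` is either everything, a set `A`
(for `n - i2 - 1` slots) or a set `B` disjoint from `A` (for `n - 1 - i1` slots), and Hall's
conditions collapse to `n - i2 - 1 ≤ α(A)` and `n - 1 - i1 ≤ α(B)`: the two inequalities of
the statement, read on the complements of `A` and `B`.
-/

open Finset

section Transversal

variable {ι E : Type*} [Fintype ι] [DecidableEq E]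

lemma sum_single_one_apply (j : ι → E) (m : E) :
    (∑ k, Pi.single (j k) 1 : E → ℕ) m = #{k | j k = m} := by
  simp [Finset.sum_apply, Pi.single_apply, eq_comm]

variable [Fintype E]

lemma card_filter_sigma_fst_mem (α : E → ℕ) (Y : Finset E) :
    #{τ : Σ m, Fin (α m) | τ.1 ∈ Y} = ∑ m ∈ Y, α m := by
  rw [show ({τ | τ.1 ∈ Y} : Finset (Σ m, Fin (α m))) = Y.sigma fun _ => univ by ext; simp,
    card_sigma]
  simp

open Classical in
theorem exists_transversal_iff (C : ι → Set E) (α : E → ℕ) :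
    (∃ j : ι → E, (∀ k, j k ∈ C k) ∧ α = ∑ k, Pi.single (j k) 1) ↔
      ∑ m, α m = Fintype.card ι ∧ ∀ Y : Finset E, #{k | C k ⊆ Y} ≤ ∑ m ∈ Y, α m := by
  constructor
  · rintro ⟨j, hj, rfl⟩
    simp only [sum_single_one_apply, sum_card_fiberwise_eq_card_filter]
    refine ⟨by simp, fun Y => card_le_card fun k hk => ?_⟩
    simp only [mem_filter, mem_univ, true_and] at hk ⊢
    exact hk (hj k)
  · rintro ⟨hcard, hY⟩
    have hall (s : Finset ι) : #s ≤ #{τ : Σ m, Fin (α m) | ∃ k ∈ s, τ.1 ∈ C k} := by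
      set Y : Finset E := {m | ∃ k ∈ s, m ∈ C k}
      calc #s ≤ #{k | C k ⊆ Y} := card_le_card fun k hk => by
              simp only [mem_filter, mem_univ, true_and]
              intro m hm
              simp only [Y, coe_filter, mem_univ, true_and, Set.mem_ofPred_eq]
              exact ⟨k, hk, hm⟩
        _ ≤ ∑ m ∈ Y, α m := hY Y
        _ = #{τ : Σ m, Fin (α m) | ∃ k ∈ s, τ.1 ∈ C k} := by
              rw [← card_filter_sigma_fst_mem]
              simp [Y]
    obtain ⟨f, hinj, hf⟩ := (Fintype.all_card_le_filter_rel_iff_exists_injective _).mp hall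
    have hbij : f.Bijective :=
      (Fintype.bijective_iff_injective_and_card f).mpr ⟨hinj, by simp [hcard]⟩
    refine ⟨fun k => (f k).1, hf, funext fun m => ?_⟩
    rw [sum_single_one_apply, card_filter, hbij.sum_comp (fun τ => if τ.1 = m then 1 else 0),
      ← card_filter]
    simpa using (card_filter_sigma_fst_mem α {m}).symm

theorem exists_transversal_iff_of_two_blocks (C : ι → Set E) (A B : Finset E)
    (hAB : Disjoint A B) (sA sB : Finset ι) (hA : ∀ k ∈ sA, C k = A) (hB : ∀ k ∈ sB, C k = B)
    (hU : ∀ k, k ∉ sA → k ∉ sB → C k = Set.univ) (α : E → ℕ) :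
    (∃ j : ι → E, (∀ k, j k ∈ C k) ∧ α = ∑ k, Pi.single (j k) 1) ↔
      ∑ m, α m = Fintype.card ι ∧ #sA ≤ ∑ m ∈ A, α m ∧ #sB ≤ ∑ m ∈ B, α m := by
  classical
  rw [exists_transversal_iff]
  refine and_congr_right fun hsum => ⟨fun h => ⟨?_, ?_⟩, fun ⟨hsA, hsB⟩ Y => ?_⟩
  · exact (card_le_card fun k hk => by simp [hA k hk]).trans (h A)
  · exact (card_le_card fun k hk => by simp [hB k hk]).trans (h B)
  by_cases hY : Y = univ
  · rw [hY, hsum]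
    exact card_le_univ _
  have block (s : Finset ι) (S : Finset E) (hs : #s ≤ ∑ m ∈ S, α m) (hsS : ∀ k ∈ s, C k = S) :
      #{k ∈ s | C k ⊆ Y} ≤ ∑ m ∈ Y ∩ S, α m := by
    by_cases hSY : S ⊆ Y
    · rw [inter_eq_right.mpr hSY]
      exact (card_filter_le _ _).trans hs
    · rw [filter_false_of_mem fun k hk => by rw [hsS k hk]; exact_mod_cast hSY]
      exact Nat.zero_le _
  calc #{k | C k ⊆ Y}
        ≤ #({k ∈ sA | C k ⊆ Y} ∪ {k ∈ sB | C k ⊆ Y}) := card_le_card fun k hk => by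
          simp only [mem_filter, mem_univ, true_and, mem_union] at hk ⊢
          by_contra! hk'
          refine hY (eq_univ_of_forall fun m => ?_)
          exact_mod_cast hk (by rw [hU k (fun h => hk'.1 h hk) (fun h => hk'.2 h hk)]; trivial)
    _ ≤ #{k ∈ sA | C k ⊆ Y} + #{k ∈ sB | C k ⊆ Y} := card_union_le _ _
    _ ≤ ∑ m ∈ Y ∩ A, α m + ∑ m ∈ Y ∩ B, α m := add_le_add (block sA A hsA hA) (block sB B hsB hB)
    _ = ∑ m ∈ Y ∩ A ∪ Y ∩ B, α m :=
          (sum_union (hAB.mono inter_subset_right inter_subset_right)).symm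
    _ ≤ ∑ m ∈ Y, α m := sum_le_sum_of_subset (union_subset inter_subset_left inter_subset_left)

end Transversal

theorem stmt7_general (n i1 i2 t2 : ℕ) (hn : 3 ≤ n) (hi1b : i1 ≤ n - 2)
    (ht2b : t2 ≤ i1 - 1) (hi2a : n - t2 ≤ i2)
    (C : Fin n → Set (Fin n))
    (hC : ∀ k : Fin n,
      C k = if k.val < n - i2 - 1 then
              {m : Fin n | ¬ (t2 ≤ m.val ∨ m.val < i2 + t2 - n)}
            else if k.val < i1 ∨ k.val = n - 1 then (Set.univ : Set (Fin n))
            else {m : Fin n | i1 ≤ m.val}) :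
    {α : Fin n → ℕ | ∃ j : Fin n → Fin n, (∀ k, j k ∈ C k) ∧ α = ∑ k, Pi.single (j k) 1} =
    {α : Fin n → ℕ | ∑ k, α k = n ∧
      ∑ k ∈ Finset.univ.filter (fun m : Fin n => m.val < i1), α k ≤ i1 + 1 ∧
      ∑ k ∈ Finset.univ.filter (fun m : Fin n => m.val < i2 + t2 - n ∨ t2 ≤ m.val), α k ≤ i2 + 1} := by
  set A : Finset (Fin n) := {m | ¬ (m.val < i2 + t2 - n ∨ t2 ≤ m.val)}
  set B : Finset (Fin n) := {m | ¬ m.val < i1}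
  have hAB : Disjoint A B := disjoint_filter.mpr fun m _ hA hB => by omega
  have hA : ∀ k ∈ Iio (⟨n - i2 - 1, by omega⟩ : Fin n), C k = A := by
    intro k hk
    rw [hC, if_pos (by simpa [Fin.lt_def] using hk)]
    ext m
    simp [A, or_comm]
  have hB : ∀ k ∈ Ico (⟨i1, by omega⟩ : Fin n) ⟨n - 1, by omega⟩, C k = B := by
    intro k hk
    simp only [mem_Ico, Fin.le_def, Fin.lt_def] at hk
    rw [hC, if_neg (by omega), if_neg (by omega)]
    ext m
    simp [B]
  have hU : ∀ k, k ∉ Iio (⟨n - i2 - 1, by omega⟩ : Fin n) →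
      k ∉ Ico (⟨i1, by omega⟩ : Fin n) ⟨n - 1, by omega⟩ → C k = Set.univ := by
    intro k hkA hkB
    simp only [mem_Iio, mem_Ico, Fin.le_def, Fin.lt_def] at hkA hkB
    rw [hC, if_neg (by omega), if_pos (by omega)]
  ext α
  rw [Set.mem_ofPred_eq, exists_transversal_iff_of_two_blocks C A B hAB _ _ hA hB hU,
    Set.mem_ofPred_eq, Fintype.card_fin, Fin.card_Iio, Fin.card_Ico]
  have hsplitA : ∑ m ∈ univ.filter (fun m : Fin n => m.val < i2 + t2 - n ∨ t2 ≤ m.val), α m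
      + ∑ m ∈ A, α m = ∑ m, α m := sum_filter_add_sum_filter_not _ _ _
  have hsplitB : ∑ m ∈ univ.filter (fun m : Fin n => m.val < i1), α m + ∑ m ∈ B, α m
      = ∑ m, α m := sum_filter_add_sum_filter_not _ _ _
  dsimp only
  constructor <;> rintro ⟨hsum, h1, h2⟩ <;> refine ⟨hsum, ?_, ?_⟩ <;> omega

theorem stmt7 (n i1 i2 t2 : ℕ) (hn : 3 ≤ n) (hi1a : 2 ≤ i1) (hi1b : i1 ≤ n - 2)
    (ht2a : n - i2 ≤ t2) (ht2b : t2 ≤ i1 - 1) (ht2c : 1 ≤ t2)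
    (hcyc : n < i2 + t2) (hi2a : n - t2 ≤ i2) (hi2b : i2 ≤ n - 2)
    (C : Fin n → Set (Fin n))
    (hC : ∀ k : Fin n,
      C k = if k.val < n - i2 - 1 then
              {m : Fin n | ¬ (t2 ≤ m.val ∨ m.val < i2 + t2 - n)}
            else if k.val < i1 ∨ k.val = n - 1 then (Set.univ : Set (Fin n))
            else {m : Fin n | i1 ≤ m.val}) :
    {α : Fin n → ℕ | ∃ j : Fin n → Fin n, (∀ k, j k ∈ C k) ∧ α = ∑ k, Pi.single (j k) 1} =
    {α : Fin n → ℕ | ∑ k, α k = n ∧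
      ∑ k ∈ Finset.univ.filter (fun m : Fin n => m.val < i1), α k ≤ i1 + 1 ∧
      ∑ k ∈ Finset.univ.filter (fun m : Fin n => m.val < i2 + t2 - n ∨ t2 ≤ m.val), α k ≤ i2 + 1} :=
  stmt7_general n i1 i2 t2 hn hi1b ht2b hi2a C hC
end

section
/- Let n ≥ 3, 2 ≤ i_1 ≤ n−2, i_1 + 1 ≤ t_2 ≤ n−1, 1 ≤ i_2 with i_2 + t_2 ≤ n and i_1 + 1 + i_2 ≠ n. Define C_1 = ... = C_{i_1} = C_n = [n] \ {t_2+1,...,t_2+i_2}, C_{i_1+1} = ... = C_{i_1+i_2+1} = [n] \ [i_1], C_{i_1+i_2+2} = ... = C_{n−1} = [n] \ ([i_1] ∪ {t_2+1,...,t_2+i_2}). Then {Σ_{k=1}^n e_{j_k} : j_k ∈ C_k} = {α ∈ ℕ^n : |α| = n, α_1 + ... + α_{i_1} ≤ i_1 + 1, α_{t_2+1} + ... + α_{t_2+i_2} ≤ i_2 + 1}. -/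
/-!
By Hall's theorem applied to the multiset in which each `m` occurs `α m` times, `α` is a sum
of transversal unit vectors iff `|α| = n` and every set `S` of slots satisfies
`|S| ≤ ∑_{m ∈ ⋃_{k ∈ S} C_k} α m`. The slots fall into three classes: `A = [i₁] ∪ {n}` with
`C_k = Qᶜ` for the block `Q = {t₂+1, …, t₂+i₂}`, a class `B` of size `i₂ + 1` with `C_k = Pᶜ`
for `P = [i₁]`, and the remaining slots with `C_k = (P ∪ Q)ᶜ`. Hall's condition for `S = Bᶜ`
and `S = Aᶜ` reads `∑_Q α ≤ |B|` and `∑_P α ≤ |A|`; conversely these two inequalities give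
Hall's condition for every `S`, according to which of the classes `A`, `B` it meets.
-/

open Finset

lemma card_filter_fin_val (n : ℕ) (p : ℕ → Prop) [DecidablePred p] :
    #{m : Fin n | p m} = #{v ∈ range n | p v} := by
  rw [card_filter, card_filter, ← Fin.sum_univ_eq_sum_range]

section Transversal

variable {ι β : Type*} {C : ι → Finset β} {α : β → ℕ}

lemma sum_pi_single_one_apply [Fintype ι] [DecidableEq β] (j : ι → β) (m : β) :
    (∑ k, Pi.single (j k) 1 : β → ℕ) m = #{k | j k = m} := by
  rw [Finset.sum_apply, card_filter]
  exact sum_congr rfl fun k _ => by simp [Pi.single_apply, eq_comm]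

theorem exists_transversal_iff_hall [Fintype ι] [Fintype β] [DecidableEq β] :
    (∃ j : ι → β, (∀ k, j k ∈ C k) ∧ α = ∑ k, Pi.single (j k) 1) ↔
      ∑ m, α m = Fintype.card ι ∧ ∀ S : Finset ι, #S ≤ ∑ m ∈ S.biUnion C, α m := by
  constructor
  · rintro ⟨j, hj, rfl⟩
    simp only [sum_pi_single_one_apply, sum_card_fiberwise_eq_card_filter]
    refine ⟨by simp, fun S => card_le_card fun k hk => ?_⟩
    simpa using ⟨k, hk, hj k⟩
  · rintro ⟨hsum, hall⟩
    -- Element `m` is replaced by `α m` distinct copies; a matching of the slots into the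
    -- copies is a bijection, and counting the copies of `m` hit recovers `α m`.
    let copies : ι → Finset (Σ m, Fin (α m)) := fun k => (C k).sigma fun _ => univ
    have hcopies : ∀ S : Finset ι, S.biUnion copies = (S.biUnion C).sigma fun _ => univ := by
      intro S; ext x; simp [copies]
    obtain ⟨f, hf, hfC⟩ := (all_card_le_biUnion_card_iff_exists_injective copies).1
      fun S => by simpa [hcopies, card_sigma] using hall S
    have hcard : Fintype.card ι = Fintype.card (Σ m, Fin (α m)) := by simp [hsum]
    let e : ι ≃ Σ m, Fin (α m) :=
      Equiv.ofBijective f ((Fintype.bijective_iff_injective_and_card f).2 ⟨hf, hcard⟩)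
    refine ⟨fun k => (e k).1, fun k => (mem_sigma.1 (hfC k)).1, funext fun m => ?_⟩
    rw [sum_pi_single_one_apply, card_filter, e.sum_comp fun x => if x.1 = m then 1 else 0,
      Fintype.sum_sigma, Fintype.sum_eq_single m fun x hx => by simp [hx]]
    simp

lemma card_le_sum_biUnion_of_subset [DecidableEq β] {S T K : Finset ι} (hK : K ⊆ S)
    (hS : S ⊆ T) (h : #T ≤ ∑ m ∈ K.biUnion C, α m) : #S ≤ ∑ m ∈ S.biUnion C, α m :=
  calc #S ≤ #T := card_le_card hS
    _ ≤ ∑ m ∈ K.biUnion C, α m := h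
    _ ≤ ∑ m ∈ S.biUnion C, α m :=
      sum_le_sum_of_subset (biUnion_subset_biUnion_of_subset_left C hK)

lemma sum_le_card_of_hall [Fintype ι] [DecidableEq ι] [Fintype β] [DecidableEq β]
    {B : Finset ι} {Q : Finset β} (hCB : ∀ k ∉ B, C k ⊆ Qᶜ)
    (hsum : ∑ m, α m = Fintype.card ι) (hall : ∀ S : Finset ι, #S ≤ ∑ m ∈ S.biUnion C, α m) :
    ∑ m ∈ Q, α m ≤ #B := by
  have hBc : #Bᶜ ≤ ∑ m ∈ Qᶜ, α m :=
    (hall Bᶜ).trans (sum_le_sum_of_subset (biUnion_subset.2 fun k hk => hCB k (mem_compl.1 hk)))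
  have := sum_add_sum_compl Q α
  have := card_compl_add_card B
  omega

lemma hall_of_blocks [Fintype ι] [DecidableEq ι] [Fintype β] [DecidableEq β]
    {A B : Finset ι} {P Q : Finset β} (hAB : Disjoint A B) (hPQ : Disjoint P Q)
    (hC : ∀ k, C k = if k ∈ A then Qᶜ else if k ∈ B then Pᶜ else (P ∪ Q)ᶜ)
    (hsum : ∑ m, α m = Fintype.card ι) (hP : ∑ m ∈ P, α m ≤ #A) (hQ : ∑ m ∈ Q, α m ≤ #B)
    (S : Finset ι) : #S ≤ ∑ m ∈ S.biUnion C, α m := by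
  have hsumP := sum_add_sum_compl P α
  have hsumQ := sum_add_sum_compl Q α
  have hsumPQ := sum_add_sum_compl (P ∪ Q) α
  rw [sum_union hPQ] at hsumPQ
  by_cases hSA : ∃ a ∈ S, a ∈ A <;> by_cases hSB : ∃ b ∈ S, b ∈ B
  · obtain ⟨a, haS, haA⟩ := hSA
    obtain ⟨b, hbS, hbB⟩ := hSB
    have hCab : ({a, b} : Finset ι).biUnion C = univ := by
      rw [biUnion_insert, singleton_biUnion, hC a, hC b, if_pos haA,
        if_neg (disjoint_right.1 hAB hbB), if_pos hbB, ← compl_inter,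
        disjoint_iff_inter_eq_empty.1 hPQ.symm, compl_empty]
    refine card_le_sum_biUnion_of_subset (insert_subset haS (singleton_subset_iff.2 hbS))
      (subset_univ S) ?_
    rw [hCab, card_univ, hsum]
  · obtain ⟨a, haS, haA⟩ := hSA
    push Not at hSB
    refine card_le_sum_biUnion_of_subset (singleton_subset_iff.2 haS)
      (fun k hk => mem_compl.2 (hSB k hk)) ?_
    rw [singleton_biUnion, hC a, if_pos haA, card_compl]
    omega
  · obtain ⟨b, hbS, hbB⟩ := hSB
    push Not at hSA
    refine card_le_sum_biUnion_of_subset (singleton_subset_iff.2 hbS)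
      (fun k hk => mem_compl.2 (hSA k hk)) ?_
    rw [singleton_biUnion, hC b, if_neg (disjoint_right.1 hAB hbB), if_pos hbB, card_compl]
    omega
  · push Not at hSA hSB
    obtain rfl | ⟨k, hkS⟩ := S.eq_empty_or_nonempty
    · simp
    refine card_le_sum_biUnion_of_subset (T := (A ∪ B)ᶜ) (singleton_subset_iff.2 hkS)
      (fun k hk => mem_compl.2 (notMem_union.2 ⟨hSA k hk, hSB k hk⟩)) ?_
    rw [singleton_biUnion, hC k, if_neg (hSA k hkS), if_neg (hSB k hkS), card_compl,
      card_union_of_disjoint hAB]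
    omega

theorem exists_transversal_blocks_iff [Fintype ι] [DecidableEq ι] [Fintype β] [DecidableEq β]
    {A B : Finset ι} {P Q : Finset β} (hAB : Disjoint A B) (hPQ : Disjoint P Q)
    (hC : ∀ k, C k = if k ∈ A then Qᶜ else if k ∈ B then Pᶜ else (P ∪ Q)ᶜ) :
    (∃ j : ι → β, (∀ k, j k ∈ C k) ∧ α = ∑ k, Pi.single (j k) 1) ↔
      ∑ m, α m = Fintype.card ι ∧ ∑ m ∈ P, α m ≤ #A ∧ ∑ m ∈ Q, α m ≤ #B := by
  rw [exists_transversal_iff_hall]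
  refine and_congr_right fun hsum =>
    ⟨fun hall => ⟨?_, ?_⟩, fun h => hall_of_blocks hAB hPQ hC hsum h.1 h.2⟩
  · refine sum_le_card_of_hall (fun k hk => ?_) hsum hall
    rw [hC k, if_neg hk]
    split_ifs
    · exact subset_rfl
    · exact compl_subset_compl.2 subset_union_left
  · refine sum_le_card_of_hall (fun k hk => ?_) hsum hall
    rw [hC k]
    split_ifs
    · exact subset_rfl
    · exact compl_subset_compl.2 subset_union_right

end Transversal

theorem stmt8_general (n i1 i2 t2 : ℕ)
    (ht2a : i1 + 1 ≤ t2)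
    (hsum : i2 + t2 ≤ n) (hne : i1 + 1 + i2 ≠ n)
    (C : Fin n → Set (Fin n))
    (hC : ∀ k : Fin n,
      C k = if k.val < i1 ∨ k.val = n - 1 then
              {m : Fin n | ¬ (t2 ≤ m.val ∧ m.val < t2 + i2)}
            else if k.val < i1 + i2 + 1 then {m : Fin n | i1 ≤ m.val}
            else {m : Fin n | i1 ≤ m.val ∧ ¬ (t2 ≤ m.val ∧ m.val < t2 + i2)}) :
    {α : Fin n → ℕ | ∃ j : Fin n → Fin n, (∀ k, j k ∈ C k) ∧ α = ∑ k, Pi.single (j k) 1} =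
    {α : Fin n → ℕ | ∑ k, α k = n ∧
      ∑ k ∈ Finset.univ.filter (fun m : Fin n => m.val < i1), α k ≤ i1 + 1 ∧
      ∑ k ∈ Finset.univ.filter (fun m : Fin n => t2 ≤ m.val ∧ m.val < t2 + i2), α k ≤ i2 + 1} := by
  have hA : #{k : Fin n | k.val < i1 ∨ k.val = n - 1} = i1 + 1 := by
    rw [card_filter_fin_val n fun v => v < i1 ∨ v = n - 1,
      show {v ∈ range n | v < i1 ∨ v = n - 1} = insert (n - 1) (range i1) by ext; simp; omega,
      card_insert_of_notMem (by simp; omega), card_range]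
  have hB : #{k : Fin n | i1 ≤ k.val ∧ k.val < i1 + i2 + 1} = i2 + 1 := by
    rw [card_filter_fin_val n fun v => i1 ≤ v ∧ v < i1 + i2 + 1,
      show {v ∈ range n | i1 ≤ v ∧ v < i1 + i2 + 1} = Ico i1 (i1 + i2 + 1) by ext; simp; omega,
      Nat.card_Ico]
    omega
  set P : Finset (Fin n) := {m | m.val < i1}
  set Q : Finset (Fin n) := {m | t2 ≤ m.val ∧ m.val < t2 + i2}
  set A : Finset (Fin n) := {k | k.val < i1 ∨ k.val = n - 1}
  set B : Finset (Fin n) := {k | i1 ≤ k.val ∧ k.val < i1 + i2 + 1}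
  have hAB : Disjoint A B := disjoint_filter.2 fun k _ _ => by omega
  have hPQ : Disjoint P Q := disjoint_filter.2 fun m _ _ => by omega
  let D : Fin n → Finset (Fin n) := fun k => if k ∈ A then Qᶜ else if k ∈ B then Pᶜ else (P ∪ Q)ᶜ
  have hCD : ∀ k, C k = D k := by
    intro k
    rw [hC k]
    ext m
    simp only [D, A, B, P, Q, mem_filter, mem_univ, true_and]
    split_ifs <;> simp <;> omega
  ext α
  simp only [Set.mem_ofPred_eq, hCD, mem_coe]
  rw [exists_transversal_blocks_iff hAB hPQ (fun k => rfl), hA, hB, Fintype.card_fin]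

theorem stmt8 (n i1 i2 t2 : ℕ) (hn : 3 ≤ n) (hi1a : 2 ≤ i1) (hi1b : i1 ≤ n - 2)
    (ht2a : i1 + 1 ≤ t2) (ht2b : t2 ≤ n - 1) (hi2a : 1 ≤ i2)
    (hsum : i2 + t2 ≤ n) (hne : i1 + 1 + i2 ≠ n)
    (C : Fin n → Set (Fin n))
    (hC : ∀ k : Fin n,
      C k = if k.val < i1 ∨ k.val = n - 1 then
              {m : Fin n | ¬ (t2 ≤ m.val ∧ m.val < t2 + i2)}
            else if k.val < i1 + i2 + 1 then {m : Fin n | i1 ≤ m.val}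
            else {m : Fin n | i1 ≤ m.val ∧ ¬ (t2 ≤ m.val ∧ m.val < t2 + i2)}) :
    {α : Fin n → ℕ | ∃ j : Fin n → Fin n, (∀ k, j k ∈ C k) ∧ α = ∑ k, Pi.single (j k) 1} =
    {α : Fin n → ℕ | ∑ k, α k = n ∧
      ∑ k ∈ Finset.univ.filter (fun m : Fin n => m.val < i1), α k ≤ i1 + 1 ∧
      ∑ k ∈ Finset.univ.filter (fun m : Fin n => t2 ≤ m.val ∧ m.val < t2 + i2), α k ≤ i2 + 1} :=
  stmt8_general n i1 i2 t2 ht2a hsum hne C hC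
end

section
/- Let n ≥ 3, 2 ≤ i_1 ≤ n−2, t_2 = i_1 + 1, i_2 = n − i_1 − 1 (so i_2 + t_2 = n and i_1 + 1 + i_2 = n). Define C_1 = ... = C_{i_1} = [n] \ {i_1+2,...,n}, C_{i_1+1} = ... = C_{n−1} = [n] \ [i_1], C_n = [n]. Then {Σ_{k=1}^n e_{j_k} : j_k ∈ C_k} = {α ∈ ℕ^n : |α| = n, α_1 + ... + α_{i_1} ≤ i_1 + 1, α_{i_1+2} + ... + α_n ≤ n − i_1}. -/
/-!
Write `α` as the weakly increasing word `w₀ ≤ w₁ ≤ ⋯ ≤ w_{n-1}` in which the letter `m` occurs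
`α m` times, so that `v ≤ w_p` exactly when the prefix sum `α₀ + ⋯ + α_{v-1}` is at most `p`.
The two bounds on `α` say precisely that `w_k ≤ i` for `k < i` and `w_{k+1} ≥ i` for
`i ≤ k < n - 1`; hence letting the `k`-th set pick `w_k`, `w_{k+1}` and `w_i` respectively
(a cyclic shift of the positions `i, …, n - 1`) gives a transversal. Conversely, a transversal
picks letters `< i` only from the first `i` sets and the last one, and letters `> i` only from
the last `n - i` sets.
-/

open Finset

section MultiplicityVector

variable {ι κ : Type*} [Fintype ι] [DecidableEq κ]

theorem sum_apply_sum_pi_single_eq_card (j : ι → κ) (t : Finset κ) :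
    ∑ m ∈ t, (∑ k, Pi.single (j k) 1 : κ → ℕ) m = #{k | j k ∈ t} := by
  simp only [Finset.sum_apply]
  rw [sum_comm, card_filter]
  exact sum_congr rfl fun k _ => sum_pi_single' (j k) 1 t

end MultiplicityVector

section PrefixSum

variable {r : ℕ} (α : Fin r → ℕ)

def prefixSum (v : ℕ) : ℕ := ∑ m with m.val < v, α m

theorem prefixSum_mono : Monotone (prefixSum α) := fun u v huv =>
  sum_le_sum_of_subset fun m => by simp only [mem_filter, mem_univ, true_and]; omega

theorem prefixSum_zero : prefixSum α 0 = 0 := by simp [prefixSum]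

theorem prefixSum_succ (m : Fin r) : prefixSum α (m.val + 1) = prefixSum α m + α m := by
  have : univ.filter (fun k : Fin r => k.val < m.val + 1) =
      insert m (univ.filter fun k : Fin r => k.val < m.val) := by
    ext k; simp only [mem_filter, mem_univ, true_and, mem_insert, Fin.ext_iff]; omega
  rw [prefixSum, this, sum_insert (by simp), add_comm, prefixSum]

theorem prefixSum_of_le {v : ℕ} (hv : r ≤ v) : prefixSum α v = ∑ m, α m := by
  rw [prefixSum, filter_true_of_mem fun m _ => m.isLt.trans_le hv]

/-- The `p`-th letter of the weakly increasing word with `α m` occurrences of each letter `m`. -/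
def sortedWord (p : ℕ) : ℕ := Nat.findGreatest (fun v => prefixSum α v ≤ p) r

theorem le_sortedWord_iff {p v : ℕ} (hv : v ≤ r) :
    v ≤ sortedWord α p ↔ prefixSum α v ≤ p :=
  ⟨fun h => (prefixSum_mono α h).trans <|
      Nat.findGreatest_spec (P := fun v => prefixSum α v ≤ p) (Nat.zero_le r)
        ((prefixSum_zero α).trans_le (Nat.zero_le p) :),
    fun h => Nat.le_findGreatest hv h⟩

theorem sortedWord_lt {p : ℕ} (hp : p < ∑ m, α m) : sortedWord α p < r := by
  have := le_sortedWord_iff α le_rfl (p := p)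
  rw [prefixSum_of_le α le_rfl] at this
  omega

theorem card_sortedWord_eq {n : ℕ} (hα : ∑ m, α m = n) (m : Fin r) :
    #{p : Fin n | sortedWord α p = m} = α m := by
  have hsub : univ.filter (fun p : Fin n => p.val < prefixSum α m) ⊆
      univ.filter (fun p : Fin n => p.val < prefixSum α (m.val + 1)) := fun p => by
    simp only [mem_filter, mem_univ, true_and]
    exact fun h => h.trans_le (prefixSum_mono α (Nat.le_succ m))
  have hle : prefixSum α (m.val + 1) ≤ n := hα ▸ prefixSum_of_le α le_rfl ▸ prefixSum_mono α m.isLt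
  have : univ.filter (fun p : Fin n => sortedWord α p = m) =
      univ.filter (fun p : Fin n => p.val < prefixSum α (m.val + 1)) \
        univ.filter (fun p : Fin n => p.val < prefixSum α m) := by
    ext p
    have hm := le_sortedWord_iff α (p := p) m.isLt.le
    have hm' := le_sortedWord_iff α (p := p) (v := m.val + 1) m.isLt
    simp only [mem_sdiff, mem_filter, mem_univ, true_and, not_lt]
    omega
  rw [this, card_sdiff_of_subset hsub, Fin.card_filter_val_lt, Fin.card_filter_val_lt,
    min_eq_right hle, min_eq_right ((prefixSum_mono α (Nat.le_succ m)).trans hle), prefixSum_succ]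
  omega

theorem exists_word_le_iff_prefixSum_le {n : ℕ} (hα : ∑ m, α m = n) :
    ∃ w : Fin n → Fin r, (∀ p v, v ≤ r → (v ≤ (w p).val ↔ prefixSum α v ≤ p.val)) ∧
      ∑ p, Pi.single (w p) 1 = α := by
  refine ⟨fun p => ⟨sortedWord α p, sortedWord_lt α (hα ▸ p.isLt)⟩,
    fun p v hv => le_sortedWord_iff α hv, funext fun m => ?_⟩
  have := sum_apply_sum_pi_single_eq_card
    (fun p : Fin n => (⟨sortedWord α p, sortedWord_lt α (hα ▸ p.isLt)⟩ : Fin r)) {m}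
  rw [sum_singleton] at this
  rw [this, ← card_sortedWord_eq α hα m]
  simp [Fin.ext_iff]

end PrefixSum

section Staircase

/-- The sets `C_k` of the presentation, indexed from `0`. -/
def staircase (n i : ℕ) (k : Fin n) : Set (Fin n) :=
  if k.val < i then {m | m.val < i + 1}
  else if k.val < n - 1 then {m | i ≤ m.val}
  else Set.univ

variable {n i : ℕ}

theorem lt_succ_of_mem_staircase {k m : Fin n} (hm : m ∈ staircase n i k) (hk : k.val < i) :
    m.val < i + 1 := by
  simpa [staircase, hk] using hm

theorem le_of_mem_staircase {k m : Fin n} (hm : m ∈ staircase n i k) (hik : i ≤ k.val)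
    (hk : k.val < n - 1) : i ≤ m.val := by
  simpa [staircase, not_lt.2 hik, hk] using hm

variable {j : Fin n → Fin n}

theorem card_filter_lt_le_of_mem_staircase (hj : ∀ k, j k ∈ staircase n i k) :
    #{k | (j k).val < i} ≤ i + 1 := by
  have hsub : univ.filter (fun k => (j k).val < i) ⊆
      univ.filter (fun k : Fin n => k.val < i) ∪ univ.filter (fun k : Fin n => n - 1 ≤ k.val) := by
    intro k
    simp only [mem_union, mem_filter, mem_univ, true_and]
    intro hjk
    by_contra! hk
    have := le_of_mem_staircase (hj k) hk.1 hk.2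
    omega
  have hlast : #(univ.filter fun k : Fin n => n - 1 ≤ k.val) ≤ 1 :=
    card_le_one.2 fun a ha b hb => by
      simp only [mem_filter, mem_univ, true_and] at ha hb
      exact Fin.ext (by omega)
  calc #{k | (j k).val < i}
      ≤ #(univ.filter fun k : Fin n => k.val < i) + 1 :=
        (card_le_card hsub).trans ((card_union_le _ _).trans (add_le_add_right hlast _))
    _ ≤ i + 1 := by rw [Fin.card_filter_val_lt]; omega

theorem card_filter_ge_le_of_mem_staircase (hj : ∀ k, j k ∈ staircase n i k) :
    #{k | i + 1 ≤ (j k).val} ≤ n - i := by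
  have hsub : univ.filter (fun k => i + 1 ≤ (j k).val) ⊆
      univ.filter (fun k : Fin n => ¬ k.val < i) := by
    intro k
    simp only [mem_filter, mem_univ, true_and]
    intro hjk hk
    have := lt_succ_of_mem_staircase (hj k) hk
    omega
  have hsplit := card_filter_add_card_filter_not (s := univ) (fun k : Fin n => k.val < i)
  rw [card_univ, Fintype.card_fin, Fin.card_filter_val_lt] at hsplit
  have := card_le_card hsub
  omega

theorem exists_mem_staircase_sum_pi_single_eq (hi : i < n) {α : Fin n → ℕ}
    (hsum : ∑ m, α m = n) (hlow : prefixSum α i ≤ i + 1)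
    (hhigh : ∑ m with i + 1 ≤ m.val, α m ≤ n - i) :
    ∃ j : Fin n → Fin n, (∀ k, j k ∈ staircase n i k) ∧ α = ∑ k, Pi.single (j k) 1 := by
  obtain ⟨w, hw, hwα⟩ := exists_word_le_iff_prefixSum_le α hsum
  have : NeZero n := ⟨by omega⟩
  have hsplit : prefixSum α (i + 1) + ∑ m with i + 1 ≤ m.val, α m = ∑ m, α m := by
    rw [prefixSum, ← sum_filter_add_sum_filter_not univ (fun m : Fin n => m.val < i + 1)]
    simp only [not_lt]
  let σ := Fin.cycleIcc (⟨i, hi⟩ : Fin n) ⟨n - 1, by omega⟩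
  refine ⟨w ∘ σ, fun k => ?_, by rw [← hwα]; exact (Equiv.sum_comp σ _).symm⟩
  unfold staircase
  split_ifs with hk hk'
  · have hσ : σ k = k := Fin.cycleIcc_of_lt hk
    show (w (σ k)).val < i + 1
    rw [hσ]
    by_contra! h
    have := (hw k (i + 1) hi).1 h
    omega
  · have hσ : (σ k).val = k.val + 1 := by
      rw [Fin.cycleIcc_of_ge_of_lt (Fin.le_def.2 (not_lt.1 hk)) (Fin.lt_def.2 hk'),
        Fin.val_add_one_of_lt' (by omega)]
    show i ≤ (w (σ k)).val
    exact (hw (σ k) i hi.le).2 (by omega)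
  · trivial

end Staircase

theorem stmt9_general (n i1 : ℕ) (hn : 3 ≤ n) (hi1b : i1 ≤ n - 2)
    (C : Fin n → Set (Fin n))
    (hC : ∀ k : Fin n,
      C k = if k.val < i1 then {m : Fin n | m.val < i1 + 1}
            else if k.val < n - 1 then {m : Fin n | i1 ≤ m.val}
            else (Set.univ : Set (Fin n))) :
    {α : Fin n → ℕ | ∃ j : Fin n → Fin n, (∀ k, j k ∈ C k) ∧ α = ∑ k, Pi.single (j k) 1} =
    {α : Fin n → ℕ | ∑ k, α k = n ∧
      ∑ k ∈ Finset.univ.filter (fun m : Fin n => m.val < i1), α k ≤ i1 + 1 ∧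
      ∑ k ∈ Finset.univ.filter (fun m : Fin n => i1 + 1 ≤ m.val), α k ≤ n - i1} := by
  obtain rfl : C = staircase n i1 := funext hC
  ext α
  constructor
  · rintro ⟨j, hj, rfl⟩
    refine ⟨?_, ?_, ?_⟩ <;> rw [sum_apply_sum_pi_single_eq_card]
    · simp
    · simpa only [mem_filter, mem_univ, true_and] using card_filter_lt_le_of_mem_staircase hj
    · simpa only [mem_filter, mem_univ, true_and] using card_filter_ge_le_of_mem_staircase hj
  · rintro ⟨hsum, hlow, hhigh⟩
    exact exists_mem_staircase_sum_pi_single_eq (by omega) hsum hlow hhigh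

theorem stmt9 (n i1 i2 t2 : ℕ) (hn : 3 ≤ n) (hi1a : 2 ≤ i1) (hi1b : i1 ≤ n - 2)
    (ht2 : t2 = i1 + 1) (hi2 : i2 = n - i1 - 1)
    (C : Fin n → Set (Fin n))
    (hC : ∀ k : Fin n,
      C k = if k.val < i1 then {m : Fin n | m.val < i1 + 1}
            else if k.val < n - 1 then {m : Fin n | i1 ≤ m.val}
            else (Set.univ : Set (Fin n))) :
    {α : Fin n → ℕ | ∃ j : Fin n → Fin n, (∀ k, j k ∈ C k) ∧ α = ∑ k, Pi.single (j k) 1} =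
    {α : Fin n → ℕ | ∑ k, α k = n ∧
      ∑ k ∈ Finset.univ.filter (fun m : Fin n => m.val < i1), α k ≤ i1 + 1 ∧
      ∑ k ∈ Finset.univ.filter (fun m : Fin n => i1 + 1 ≤ m.val), α k ≤ n - i1} :=
  stmt9_general n i1 hn hi1b C hC
end

section
/- Let n ≥ 3, 2 ≤ i_1 ≤ n−2, t_2 = 0, and i_1 < i_2 ≤ n−2. Define C_1 = ... = C_{i_1} = C_n = [n], C_{i_1+1} = ... = C_{i_2} = [n] \ [i_1], C_{i_2+1} = ... = C_{n−1} = [n] \ [i_2]. Then {Σ_{k=1}^n e_{j_k} : j_k ∈ C_k} = {α ∈ ℕ^n : |α| = n, α_1 + ... + α_{i_1} ≤ i_1 + 1, α_1 + ... + α_{i_2} ≤ i_2 + 1}. -/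
/-!
Necessity: if `j k ∈ C k` and `j k < c` for `c ∈ {i1, i2}`, then `k < c` or `k = n - 1`,
so at most `c + 1` of the chosen indices lie below `c`.

Sufficiency: list the entries of `α` in increasing order as a monotone `j : Fin n → Fin n` and
give position `k` the entry `j (σ k)`, where `σ` is the cycle `(i1 i1+1 … n-1)`. A constrained
position `i1 ≤ k < n - 1` then receives the entry of rank `k + 1`, and since at most
`c + 1 ≤ k + 1` entries are below `c`, that entry is at least `c`.
-/

open Finset

theorem sum_sum_single_one_apply {ι β : Type*} [Fintype ι] [DecidableEq β] (j : ι → β)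
    (s : Finset β) : ∑ m ∈ s, (∑ k, Pi.single (j k) (1 : ℕ)) m = #{k | j k ∈ s} := by
  simp [Finset.sum_apply, Finset.sum_comm (s := s), Finset.sum_pi_single']

theorem Fin.card_filter_le_add_one_of_lt_or_eq {n c l : ℕ} (P : Fin n → Prop) [DecidablePred P]
    (h : ∀ k, P k → k.val < c ∨ k.val = l) : #{k | P k} ≤ c + 1 :=
  calc #{k | P k}
    _ ≤ #(({k | k.val < c} : Finset (Fin n)) ∪ ({k | k.val = l} : Finset (Fin n))) :=
        card_le_card fun k hk => by simpa using h k (mem_filter.mp hk).2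
    _ ≤ #({k | k.val < c} : Finset (Fin n)) + #({k | k.val = l} : Finset (Fin n)) :=
        card_union_le _ _
    _ ≤ c + 1 := by
        gcongr
        · rw [Fin.card_filter_val_lt]; omega
        · exact card_le_one.mpr fun a ha b hb => Fin.ext (by simp_all)

theorem exists_monotone_eq_sum_single {β : Type*} [LinearOrder β] [Fintype β] {N : ℕ}
    (α : β → ℕ) (hα : ∑ m, α m = N) :
    ∃ j : Fin N → β, Monotone j ∧ α = ∑ k, Pi.single (j k) 1 := by
  set M : Multiset β := ∑ m, α m • {m}
  have hL : M.sort.length = N := by simp [M, ← hα]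
  refine ⟨fun k => M.sort.get (k.cast hL.symm), ?_, ?_⟩
  · exact (Multiset.pairwise_sort M _).sortedLE.monotone_get.comp (Fin.cast_strictMono _).monotone
  · have hsum : ∑ k : Fin N, Pi.single (M.sort.get (k.cast hL.symm)) (1 : ℕ) =
        (M.map fun x => Pi.single x 1).sum := by
      conv_rhs => rw [← Multiset.sort_eq M (· ≤ ·), Multiset.map_coe, Multiset.sum_coe,
        ← Fin.sum_univ_fun_getElem]
      exact Fintype.sum_equiv (finCongr hL.symm) _ _ fun _ => rfl
    rw [hsum, ← Multiset.mapAddMonoidHom_apply, ← Multiset.coe_sumAddMonoidHom, map_sum,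
      map_sum]
    simp only [map_nsmul, Multiset.coe_sumAddMonoidHom, Multiset.mapAddMonoidHom_apply,
      Multiset.map_singleton, Multiset.sum_singleton, ← Pi.single_smul, smul_eq_mul, mul_one]
    exact (univ_sum_single α).symm

theorem Fin.val_cycleIcc_of_ge_of_lt {n : ℕ} {i j k : Fin n} (hik : i ≤ k) (hkj : k < j) :
    (Fin.cycleIcc i j k).val = k.val + 1 := by
  have := k.neZero
  rw [Fin.cycleIcc_of_ge_of_lt hik hkj, Fin.val_add_one_of_lt' (by omega)]

theorem Monotone.le_val_apply_of_card_filter_val_lt_le {N m c : ℕ} {j : Fin N → Fin m}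
    (hj : Monotone j) {p : Fin N} (h : #{k | (j k).val < c} ≤ p) : c ≤ (j p).val := by
  by_contra! hp
  have hsub : Iic p ⊆ ({k | (j k).val < c} : Finset (Fin N)) := fun k hk =>
    mem_filter.mpr ⟨mem_univ k, (Fin.le_def.mp (hj (mem_Iic.mp hk))).trans_lt hp⟩
  have := card_le_card hsub
  rw [Fin.card_Iic] at this
  omega

theorem sum_filter_val_lt_sum_single_le {n m c l : ℕ} {j : Fin n → Fin m}
    (h : ∀ k, (j k).val < c → k.val < c ∨ k.val = l) :
    ∑ x ∈ univ.filter (fun x : Fin m => x.val < c), (∑ k, Pi.single (j k) (1 : ℕ)) x ≤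
      c + 1 := by
  rw [sum_sum_single_one_apply]
  simpa using Fin.card_filter_le_add_one_of_lt_or_eq _ h

theorem stmt11_general (n i1 i2 : ℕ) (hi2a : i1 < i2) (hi2b : i2 ≤ n - 2)
    (C : Fin n → Set (Fin n))
    (hC : ∀ k : Fin n,
      C k = if k.val < i1 ∨ k.val = n - 1 then (Set.univ : Set (Fin n))
            else if k.val < i2 then {m : Fin n | i1 ≤ m.val}
            else {m : Fin n | i2 ≤ m.val}) :
    {α : Fin n → ℕ | ∃ j : Fin n → Fin n, (∀ k, j k ∈ C k) ∧ α = ∑ k, Pi.single (j k) 1} =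
    {α : Fin n → ℕ | ∑ k, α k = n ∧
      ∑ k ∈ Finset.univ.filter (fun m : Fin n => m.val < i1), α k ≤ i1 + 1 ∧
      ∑ k ∈ Finset.univ.filter (fun m : Fin n => m.val < i2), α k ≤ i2 + 1} := by
  ext α
  simp only [Set.mem_ofPred_eq]
  constructor
  · rintro ⟨j, hj, rfl⟩
    have hjC : ∀ k : Fin n, k.val < i1 ∨ k.val = n - 1 ∨
        (i1 ≤ (j k).val ∧ (k.val < i2 ∨ i2 ≤ (j k).val)) := by
      intro k
      have := hj k
      rw [hC k] at this
      split_ifs at this <;> simp only [Set.mem_ofPred_eq, Set.mem_univ] at this <;> omega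
    refine ⟨by simpa using sum_sum_single_one_apply j univ,
      sum_filter_val_lt_sum_single_le (l := n - 1) ?_,
      sum_filter_val_lt_sum_single_le (l := n - 1) ?_⟩ <;>
      intro k hk <;> have := hjC k <;> omega
  · rintro ⟨hsum, hle1, hle2⟩
    obtain ⟨j, hj, rfl⟩ := exists_monotone_eq_sum_single α hsum
    rw [sum_sum_single_one_apply] at hle1 hle2
    simp only [mem_filter, mem_univ, true_and] at hle1 hle2
    set σ := Fin.cycleIcc (⟨i1, by omega⟩ : Fin n) ⟨n - 1, by omega⟩
    have hσ (k : Fin n) (hk : i1 ≤ k.val ∧ k.val < n - 1) : (σ k).val = k.val + 1 :=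
      Fin.val_cycleIcc_of_ge_of_lt (Fin.le_def.mpr hk.1) (Fin.lt_def.mpr hk.2)
    refine ⟨j ∘ σ, fun k => ?_, (Equiv.sum_comp σ _).symm⟩
    rw [hC k]
    split_ifs
    · trivial
    · exact hj.le_val_apply_of_card_filter_val_lt_le (by rw [hσ k (by omega)]; omega)
    · exact hj.le_val_apply_of_card_filter_val_lt_le (by rw [hσ k (by omega)]; omega)

theorem stmt11 (n i1 i2 t2 : ℕ) (hn : 3 ≤ n) (hi1a : 2 ≤ i1) (hi1b : i1 ≤ n - 2)
    (ht2 : t2 = 0) (hi2a : i1 < i2) (hi2b : i2 ≤ n - 2)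
    (C : Fin n → Set (Fin n))
    (hC : ∀ k : Fin n,
      C k = if k.val < i1 ∨ k.val = n - 1 then (Set.univ : Set (Fin n))
            else if k.val < i2 then {m : Fin n | i1 ≤ m.val}
            else {m : Fin n | i2 ≤ m.val}) :
    {α : Fin n → ℕ | ∃ j : Fin n → Fin n, (∀ k, j k ∈ C k) ∧ α = ∑ k, Pi.single (j k) 1} =
    {α : Fin n → ℕ | ∑ k, α k = n ∧
      ∑ k ∈ Finset.univ.filter (fun m : Fin n => m.val < i1), α k ≤ i1 + 1 ∧
      ∑ k ∈ Finset.univ.filter (fun m : Fin n => m.val < i2), α k ≤ i2 + 1} :=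
  stmt11_general n i1 i2 hi2a hi2b C hC
end

section
/- Let n ≥ 3, 2 ≤ i_1 ≤ n−2, 1 ≤ t_2 ≤ i_1 − 1, and i_1 + 1 − t_2 ≤ i_2 ≤ n − t_2 − 1. Let P = {α ∈ ℕ^n : |α| = n, α_1 + ... + α_{i_1} ≤ i_1 + 1, α_{t_2+1} + ... + α_{t_2+i_2} ≤ i_2 + 1} (interpreting the second sum cyclically if t_2 + i_2 > n). Then there exist no subsets C_1,...,C_n ⊆ [n] with P = {Σ_{k=1}^n e_{j_k} : j_k ∈ C_k}. -/
/-!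
Write `r(X)` for the number of `k` with `C k` meeting `X`; every base `β` of the transversal
polymatroid has `∑_{v ∈ X} β v ≤ r(X)`. Conversely, choosing `j k ∈ C k` greedily (inside
`A ∩ B` when possible, else inside `A ∪ B`) yields a single base `β` with
`r(A ∩ B) + r(A ∪ B) ≤ ∑_A β + ∑_B β`. For the two windows `A = [0, i1)` and
`B = [t2, t2 + i2)`, the set `P` contains a vector with `min i1 i2 + 1` units at a point of
`A ∩ B`, and one with `min (i1 + i2 + 2) n` units on `A ∪ B`. If `P` were transversal,
the greedy base would lie in `P`, so `min i1 i2 + 1 + min (i1 + i2 + 2) n ≤ i1 + i2 + 2`,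
which fails since `max i1 i2 + 2 ≤ n`.
-/

open Finset

variable {ι α : Type*} [Fintype ι] [DecidableEq α]

def transversalBases (C : ι → Set α) : Set (α → ℕ) :=
  {β | ∃ j : ι → α, (∀ k, j k ∈ C k) ∧ β = ∑ k, Pi.single (j k) 1}

open Classical in
noncomputable def transversalRank (C : ι → Set α) (X : Finset α) : ℕ :=
  #{k | ∃ v ∈ X, v ∈ C k}

variable {C : ι → Set α}

theorem sum_sum_pi_single (j : ι → α) (X : Finset α) :
    ∑ v ∈ X, (∑ k, Pi.single (j k) 1 : α → ℕ) v = #{k | j k ∈ X} := by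
  simp only [Finset.sum_apply, card_filter]
  rw [sum_comm]
  simp [sum_pi_single']

theorem sum_le_transversalRank {β : α → ℕ} (hβ : β ∈ transversalBases C) (X : Finset α) :
    ∑ v ∈ X, β v ≤ transversalRank C X := by
  obtain ⟨j, hj, rfl⟩ := hβ
  rw [sum_sum_pi_single, transversalRank]
  exact card_le_card fun k hk => by
    simp only [mem_filter, mem_univ, true_and] at hk ⊢
    exact ⟨j k, hk, hj k⟩

theorem exists_mem_transversalBases_rank_le_of_subset {S T : Finset α} (hST : S ⊆ T)
    (hC : (transversalBases C).Nonempty) :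
    ∃ β ∈ transversalBases C,
      transversalRank C S ≤ ∑ v ∈ S, β v ∧ transversalRank C T ≤ ∑ v ∈ T, β v := by
  classical
  obtain ⟨-, j₀, hj₀, -⟩ := hC
  let j : ι → α := fun k =>
    if hS : ∃ v ∈ S, v ∈ C k then hS.choose
    else if hT : ∃ v ∈ T, v ∈ C k then hT.choose else j₀ k
  have hj : ∀ k, j k ∈ C k := by
    intro k
    simp only [j]
    split_ifs with hS hT
    exacts [hS.choose_spec.2, hT.choose_spec.2, hj₀ k]
  have hjS : ∀ k, (∃ v ∈ S, v ∈ C k) → j k ∈ S := by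
    intro k hS
    simp only [j, dif_pos hS]
    exact hS.choose_spec.1
  have hjT : ∀ k, (∃ v ∈ T, v ∈ C k) → j k ∈ T := by
    intro k hT
    by_cases hS : ∃ v ∈ S, v ∈ C k
    · exact hST (hjS k hS)
    · simp only [j, dif_neg hS, dif_pos hT]
      exact hT.choose_spec.1
  refine ⟨_, ⟨j, hj, rfl⟩, ?_, ?_⟩ <;> rw [sum_sum_pi_single, transversalRank]
  · exact card_le_card (monotone_filter_right _ fun k _ => hjS k)
  · exact card_le_card (monotone_filter_right _ fun k _ => hjT k)

theorem exists_mem_transversalBases_inter_union_le (hC : (transversalBases C).Nonempty)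
    (A B : Finset α) :
    ∃ β ∈ transversalBases C, transversalRank C (A ∩ B) + transversalRank C (A ∪ B) ≤
      ∑ v ∈ A, β v + ∑ v ∈ B, β v := by
  obtain ⟨β, hβ, hinter, hunion⟩ :=
    exists_mem_transversalBases_rank_le_of_subset (inter_subset_union (s := A) (t := B)) hC
  refine ⟨β, hβ, ?_⟩
  rw [← sum_union_inter]
  omega

theorem stmt12_general (n i1 i2 t2 : ℕ)
    (ht2a : 1 ≤ t2) (ht2b : t2 ≤ i1 - 1)
    (hi2a : i1 + 1 - t2 ≤ i2) (hi2b : i2 ≤ n - t2 - 1) :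
    ¬ ∃ C : Fin n → Set (Fin n),
      {α : Fin n → ℕ | ∑ k, α k = n ∧
        ∑ k ∈ Finset.univ.filter (fun m : Fin n => m.val < i1), α k ≤ i1 + 1 ∧
        ∑ k ∈ Finset.univ.filter (fun m : Fin n => t2 ≤ m.val ∧ m.val < t2 + i2), α k ≤ i2 + 1} =
      {α : Fin n → ℕ | ∃ j : Fin n → Fin n, (∀ k, j k ∈ C k) ∧ α = ∑ k, Pi.single (j k) 1} := by
  rintro ⟨C, hC⟩
  set A : Finset (Fin n) := {m | m.val < i1}
  set B : Finset (Fin n) := {m | t2 ≤ m.val ∧ m.val < t2 + i2}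
  have hP : ∀ β : Fin n → ℕ, ∑ k, β k = n ∧ ∑ k ∈ A, β k ≤ i1 + 1 ∧ ∑ k ∈ B, β k ≤ i2 + 1 ↔
      β ∈ transversalBases C := fun β => Set.ext_iff.mp hC β
  let a : Fin n := ⟨0, by omega⟩
  let m : Fin n := ⟨t2, by omega⟩
  let b : Fin n := ⟨t2 + i2 - 1, by omega⟩
  let o : Fin n := ⟨n - 1, by omega⟩
  set y := min i1 i2 + 1 with hy
  set s := min (i1 + i2 + 2) n with hs
  set γ : Fin n → ℕ := Pi.single m y + Pi.single o (n - y)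
  set δ : Fin n → ℕ := Pi.single a (i1 + 1) + Pi.single b (s - (i1 + 1)) + Pi.single o (n - s)
  have hγ : γ ∈ transversalBases C := (hP γ).1 <| by
    simp [γ, sum_add_distrib, sum_pi_single', A, B, m, o]
    split_ifs <;> omega
  have hδ : δ ∈ transversalBases C := (hP δ).1 <| by
    simp [δ, sum_add_distrib, sum_pi_single', A, B, a, b, o]
    split_ifs <;> omega
  have hinter : y ≤ transversalRank C (A ∩ B) := le_trans (by
    simp [γ, sum_add_distrib, sum_pi_single', A, B, m, o]
    split_ifs <;> omega) (sum_le_transversalRank hγ _)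
  have hunion : s ≤ transversalRank C (A ∪ B) := le_trans (by
    simp [δ, sum_add_distrib, sum_pi_single', A, B, a, b, o]
    split_ifs <;> omega) (sum_le_transversalRank hδ _)
  obtain ⟨β, hβ, hβAB⟩ := exists_mem_transversalBases_inter_union_le ⟨γ, hγ⟩ A B
  obtain ⟨-, hβA, hβB⟩ := (hP β).2 hβ
  omega

theorem stmt12 (n i1 i2 t2 : ℕ) (hn : 3 ≤ n) (hi1a : 2 ≤ i1) (hi1b : i1 ≤ n - 2)
    (ht2a : 1 ≤ t2) (ht2b : t2 ≤ i1 - 1)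
    (hi2a : i1 + 1 - t2 ≤ i2) (hi2b : i2 ≤ n - t2 - 1) :
    ¬ ∃ C : Fin n → Set (Fin n),
      {α : Fin n → ℕ | ∑ k, α k = n ∧
        ∑ k ∈ Finset.univ.filter (fun m : Fin n => m.val < i1), α k ≤ i1 + 1 ∧
        ∑ k ∈ Finset.univ.filter (fun m : Fin n => t2 ≤ m.val ∧ m.val < t2 + i2), α k ≤ i2 + 1} =
      {α : Fin n → ℕ | ∃ j : Fin n → Fin n, (∀ k, j k ∈ C k) ∧ α = ∑ k, Pi.single (j k) 1} :=
  stmt12_general n i1 i2 t2 ht2a ht2b hi2a hi2b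
end

section
/- Let n ≥ 3, 2 ≤ i_1 ≤ n−2, i_1 + 1 ≤ t_2 ≤ n−1, and n − t_2 + 1 ≤ i_2 ≤ n − t_2 + i_1 − 1. Let P = {α ∈ ℕ^n : |α| = n, α_1 + ... + α_{i_1} ≤ i_1 + 1, Σ_{k=1}^{i_2+t_2−n} α_k + Σ_{k=t_2+1}^{n} α_k ≤ i_2 + 1}. Then there exist no subsets C_1,...,C_n ⊆ [n] with P = {Σ_{k=1}^n e_{j_k} : j_k ∈ C_k}. -/
/-!
A transversal polymatroid with presentation `C₁, …, Cₙ` has rank function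
`r(U) = #{k | Cₖ ∩ U ≠ ∅}`: every vector `α` of its base set has `α(U) ≤ r(U)`, and the bound is
attained by choosing `jₖ ∈ U` wherever possible. As a cardinality of a union of index sets, `r` is
submodular, so for `A = {1, …, i₁}` and `B` the second constraint set, any two base vectors satisfy
`μ(A ∩ B) + ξ(A ∪ B) ≤ r(A) + r(B) ≤ (i₁ + 1) + (i₂ + 1)`. But `P` contains a vector with
`min(i₁, i₂) + 1` units on `e₁ ∈ A ∩ B` and one with `min(n, i₁ + i₂ + 2)` units inside `A ∪ B`,
which together exceed that bound.
-/

open Finset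

namespace Transversal

variable {ι κ : Type*} [Fintype ι] [DecidableEq κ]

def vectors (C : ι → Set κ) : Set (κ → ℕ) :=
  {α | ∃ j : ι → κ, (∀ k, j k ∈ C k) ∧ α = ∑ k, Pi.single (j k) 1}

open scoped Classical in
noncomputable def neighbors (C : ι → Set κ) (U : Finset κ) : Finset ι :=
  {k | ∃ c ∈ U, c ∈ C k}

lemma sum_sum_single_eq_card (j : ι → κ) (U : Finset κ) :
    ∑ m ∈ U, (∑ k, Pi.single (j k) 1 : κ → ℕ) m = #{k | j k ∈ U} := by
  simp only [Finset.sum_apply, card_filter]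
  rw [sum_comm]
  exact sum_congr rfl fun k _ => sum_pi_single' (j k) 1 U

lemma sum_le_card_neighbors {C : ι → Set κ} {α : κ → ℕ} (hα : α ∈ vectors C)
    (U : Finset κ) : ∑ m ∈ U, α m ≤ #(neighbors C U) := by
  obtain ⟨j, hj, rfl⟩ := hα
  rw [sum_sum_single_eq_card]
  exact card_le_card fun k hk => by
    simp only [neighbors, mem_filter, mem_univ, true_and] at hk ⊢
    exact ⟨j k, hk, hj k⟩

lemma card_neighbors_le {C : ι → Set κ} {U : Finset κ} {b : ℕ}
    (hne : (vectors C).Nonempty) (hb : ∀ α ∈ vectors C, ∑ m ∈ U, α m ≤ b) :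
    #(neighbors C U) ≤ b := by
  classical
  obtain ⟨-, j₀, hj₀, -⟩ := hne
  let j : ι → κ := fun k => if h : ∃ c ∈ U, c ∈ C k then h.choose else j₀ k
  have hjC : ∀ k, j k ∈ C k := fun k => by
    by_cases h : ∃ c ∈ U, c ∈ C k
    · simpa only [j, dif_pos h] using h.choose_spec.2
    · simpa only [j, dif_neg h] using hj₀ k
  calc #(neighbors C U) ≤ #{k | j k ∈ U} := card_le_card fun k hk => by
        simp only [neighbors, mem_filter, mem_univ, true_and] at hk ⊢
        simpa only [j, dif_pos hk] using hk.choose_spec.1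
    _ = ∑ m ∈ U, (∑ k, Pi.single (j k) 1 : κ → ℕ) m := (sum_sum_single_eq_card j U).symm
    _ ≤ b := hb _ ⟨j, hjC, rfl⟩

lemma card_neighbors_union_add_card_neighbors_inter_le (C : ι → Set κ) (U V : Finset κ) :
    #(neighbors C (U ∪ V)) + #(neighbors C (U ∩ V)) ≤
      #(neighbors C U) + #(neighbors C V) := by
  classical
  have hunion : neighbors C (U ∪ V) = neighbors C U ∪ neighbors C V := by
    ext k
    simp only [neighbors, mem_union, mem_filter, mem_univ, true_and, or_and_right, exists_or]
  have hinter : neighbors C (U ∩ V) ⊆ neighbors C U ∩ neighbors C V := fun k hk => by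
    simp only [neighbors, mem_inter, mem_filter, mem_univ, true_and] at hk ⊢
    obtain ⟨c, ⟨hcU, hcV⟩, hck⟩ := hk
    exact ⟨⟨c, hcU, hck⟩, ⟨c, hcV, hck⟩⟩
  rw [hunion, ← card_union_add_card_inter (neighbors C U)]
  exact Nat.add_le_add_left (card_le_card hinter) _

theorem sum_inter_add_sum_union_le {C : ι → Set κ} {U V : Finset κ} {a b : ℕ}
    (hU : ∀ α ∈ vectors C, ∑ m ∈ U, α m ≤ a) (hV : ∀ α ∈ vectors C, ∑ m ∈ V, α m ≤ b)
    {μ ξ : κ → ℕ} (hμ : μ ∈ vectors C) (hξ : ξ ∈ vectors C) :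
    ∑ m ∈ U ∩ V, μ m + ∑ m ∈ U ∪ V, ξ m ≤ a + b :=
  calc ∑ m ∈ U ∩ V, μ m + ∑ m ∈ U ∪ V, ξ m
      ≤ #(neighbors C (U ∩ V)) + #(neighbors C (U ∪ V)) :=
        add_le_add (sum_le_card_neighbors hμ _) (sum_le_card_neighbors hξ _)
    _ ≤ #(neighbors C U) + #(neighbors C V) := by
        rw [add_comm]; exact card_neighbors_union_add_card_neighbors_inter_le C U V
    _ ≤ a + b := add_le_add (card_neighbors_le ⟨μ, hμ⟩ hU) (card_neighbors_le ⟨μ, hμ⟩ hV)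

end Transversal

/-- Coordinates are `0`-indexed: `lowSegment n i` is the paper's `{1, …, i}`. -/
def lowSegment (n i : ℕ) : Finset (Fin n) := univ.filter fun m => m.val < i

def wrapSegment (n s t : ℕ) : Finset (Fin n) := univ.filter fun m => m.val < s ∨ t ≤ m.val

def polytope (n i1 i2 t2 : ℕ) : Set (Fin n → ℕ) :=
  {α | ∑ k, α k = n ∧ ∑ k ∈ lowSegment n i1, α k ≤ i1 + 1 ∧
    ∑ k ∈ wrapSegment n (i2 + t2 - n) t2, α k ≤ i2 + 1}

section Polytope

variable {n i1 i2 t2 : ℕ} (ht2a : i1 + 1 ≤ t2) (ht2b : t2 ≤ n - 1)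
  (hi2a : n - t2 + 1 ≤ i2) (hi2b : i2 ≤ n - t2 + i1 - 1)
include ht2a ht2b hi2a hi2b

/-- The witness is `m e₁ + (n - m) e_{i₁+1}`, and `e_{i₁+1}` lies outside `A ∪ B`. -/
lemma exists_mem_polytope_sum_inter :
    ∃ μ ∈ polytope n i1 i2 t2,
      ∑ m ∈ lowSegment n i1 ∩ wrapSegment n (i2 + t2 - n) t2, μ m = min i1 i2 + 1 := by
  refine ⟨Pi.single ⟨0, by omega⟩ (min i1 i2 + 1) + Pi.single ⟨i1, by omega⟩ (n - (min i1 i2 + 1)),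
    ⟨?_, ?_, ?_⟩, ?_⟩ <;>
  simp only [lowSegment, wrapSegment, Pi.add_apply, sum_add_distrib, sum_pi_single',
    mem_inter, mem_filter, mem_univ, true_and] <;>
  split_ifs <;> omega

/-- The witness is `(i₁ + 1) e_{i₁} + (q - i₁ - 1) e_{t₂+1} + (n - q) e_{i₁+1}` with
`q = min(n, i₁ + i₂ + 2)`, where `e_{i₁} ∈ A \ B` and `e_{t₂+1} ∈ B \ A`. -/
lemma exists_mem_polytope_sum_union :
    ∃ ξ ∈ polytope n i1 i2 t2,
      ∑ m ∈ lowSegment n i1 ∪ wrapSegment n (i2 + t2 - n) t2, ξ m = min n (i1 + i2 + 2) := by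
  refine ⟨Pi.single ⟨i1 - 1, by omega⟩ (i1 + 1)
      + Pi.single ⟨t2, by omega⟩ (min n (i1 + i2 + 2) - (i1 + 1))
      + Pi.single ⟨i1, by omega⟩ (n - min n (i1 + i2 + 2)), ⟨?_, ?_, ?_⟩, ?_⟩ <;>
  simp only [lowSegment, wrapSegment, Pi.add_apply, sum_add_distrib, sum_pi_single',
    mem_union, mem_filter, mem_univ, true_and] <;>
  split_ifs <;> omega

end Polytope

theorem stmt13_general (n i1 i2 t2 : ℕ)
    (ht2a : i1 + 1 ≤ t2) (ht2b : t2 ≤ n - 1)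
    (hi2a : n - t2 + 1 ≤ i2) (hi2b : i2 ≤ n - t2 + i1 - 1) :
    ¬ ∃ C : Fin n → Set (Fin n),
      {α : Fin n → ℕ | ∑ k, α k = n ∧
        ∑ k ∈ Finset.univ.filter (fun m : Fin n => m.val < i1), α k ≤ i1 + 1 ∧
        ∑ k ∈ Finset.univ.filter (fun m : Fin n => m.val < i2 + t2 - n ∨ t2 ≤ m.val), α k ≤ i2 + 1} =
      {α : Fin n → ℕ | ∃ j : Fin n → Fin n, (∀ k, j k ∈ C k) ∧ α = ∑ k, Pi.single (j k) 1} := by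
  rintro ⟨C, hC⟩
  change polytope n i1 i2 t2 = Transversal.vectors C at hC
  obtain ⟨μ, hμ, hμA⟩ := exists_mem_polytope_sum_inter ht2a ht2b hi2a hi2b
  obtain ⟨ξ, hξ, hξA⟩ := exists_mem_polytope_sum_union ht2a ht2b hi2a hi2b
  have := Transversal.sum_inter_add_sum_union_le (fun α hα => (hC ▸ hα).2.1)
    (fun α hα => (hC ▸ hα).2.2) (hC ▸ hμ) (hC ▸ hξ)
  omega

theorem stmt13 (n i1 i2 t2 : ℕ) (hn : 3 ≤ n) (hi1a : 2 ≤ i1) (hi1b : i1 ≤ n - 2)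
    (ht2a : i1 + 1 ≤ t2) (ht2b : t2 ≤ n - 1)
    (hi2a : n - t2 + 1 ≤ i2) (hi2b : i2 ≤ n - t2 + i1 - 1) :
    ¬ ∃ C : Fin n → Set (Fin n),
      {α : Fin n → ℕ | ∑ k, α k = n ∧
        ∑ k ∈ Finset.univ.filter (fun m : Fin n => m.val < i1), α k ≤ i1 + 1 ∧
        ∑ k ∈ Finset.univ.filter (fun m : Fin n => m.val < i2 + t2 - n ∨ t2 ≤ m.val), α k ≤ i2 + 1} =
      {α : Fin n → ℕ | ∃ j : Fin n → Fin n, (∀ k, j k ∈ C k) ∧ α = ∑ k, Pi.single (j k) 1} :=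
  stmt13_general n i1 i2 t2 ht2a ht2b hi2a hi2b
end

section
/- Let n ≥ 3, 1 ≤ i ≤ n−1, 0 ≤ t ≤ n−1 with i + t ≤ n, and let A = {α ∈ ℕ^n : |α| = n, α_{t+1} + ... + α_{t+i} ≤ i + 1}. If α ∈ ℕ^n satisfies α_k ≥ 1 for all k, n | |α|, and (i+1)(Σ_{k≤t} α_k + Σ_{k>t+i} α_k) − (n−i−1)(Σ_{k=t+1}^{t+i} α_k) ≥ gcd(n, i+1), then α − (1,...,1) lies in the submonoid of ℕ^n generated by A. -/
/-!
Write `∑ α = n * m`. Since the two blocks of `α` add up to `n * m`, the weighted difference in the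
hypothesis is `n * ((i + 1) * m - S)` with `S` the sum of `α` over the window, so it is positive
exactly when `S < (i + 1) * m`. Then `β = α - 1` has `∑ β = (m - 1) * n` and window sum at most
`(m - 1) * (i + 1)`. Any such `β` splits greedily into `m - 1` vectors of total `n` and window
sum at most `i + 1`: peel off one piece that carries just the window mass the remaining pieces
cannot hold, and induct.
-/

open Finset

lemma exists_le_sum_eq {ι : Type*} [DecidableEq ι] (β : ι → ℕ) (s : Finset ι) {c : ℕ}
    (hc : c ≤ ∑ k ∈ s, β k) :
    ∃ γ ≤ β, ∑ k ∈ s, γ k = c := by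
  induction c with
  | zero => exact ⟨0, fun _ => Nat.zero_le _, by simp⟩
  | succ c ih =>
    obtain ⟨γ, hγβ, hγs⟩ := ih (by omega)
    obtain ⟨k, hks, hk⟩ : ∃ k ∈ s, γ k < β k := by
      by_contra! h
      have := sum_le_sum h
      omega
    refine ⟨γ + Pi.single k 1, fun j => ?_, ?_⟩
    · rcases eq_or_ne j k with rfl | hj
      · simpa using hk
      · simpa [hj] using hγβ j
    · simp only [Pi.add_apply, sum_add_distrib, sum_pi_single', if_pos hks, hγs]

section SimplexSlab

variable {ι : Type*} [Fintype ι] [DecidableEq ι]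

def simplexSlab (s : Finset ι) (d b : ℕ) : Set (ι → ℕ) :=
  {γ | ∑ k, γ k = d ∧ ∑ k ∈ s, γ k ≤ b}

lemma exists_simplexSlab_le {s : Finset ι} {d b m : ℕ} (hbd : b ≤ d) {β : ι → ℕ}
    (hsum : ∑ k, β k = (m + 1) * d) (hs : ∑ k ∈ s, β k ≤ (m + 1) * b) :
    ∃ γ ∈ simplexSlab s d b, γ ≤ β ∧ ∑ k ∈ s, (β - γ) k ≤ m * b := by
  have hβsplit := sum_add_sum_compl s β
  have hmbd : m * b ≤ m * d := Nat.mul_le_mul_left m hbd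
  obtain ⟨γ₁, hγ₁, hγ₁s⟩ := exists_le_sum_eq β s (tsub_le_self (b := m * b))
  obtain ⟨γ₂, hγ₂, hγ₂s⟩ := exists_le_sum_eq β sᶜ (c := d - (∑ k ∈ s, β k - m * b))
    (by rw [add_mul, one_mul] at hsum hs; omega)
  set γ := s.piecewise γ₁ γ₂
  have hγs : ∑ k ∈ s, γ k = ∑ k ∈ s, β k - m * b :=
    (sum_congr rfl fun k hk => s.piecewise_eq_of_mem γ₁ γ₂ hk).trans hγ₁s
  have hγsc : ∑ k ∈ sᶜ, γ k = d - (∑ k ∈ s, β k - m * b) :=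
    (sum_congr rfl fun k hk => s.piecewise_eq_of_notMem γ₁ γ₂ (mem_compl.mp hk)).trans hγ₂s
  have hγβ : γ ≤ β := s.piecewise_le_of_le_of_le hγ₁ hγ₂
  rw [add_mul, one_mul] at hsum hs
  refine ⟨γ, ⟨?_, ?_⟩, hγβ, ?_⟩
  · rw [← sum_add_sum_compl s γ, hγs, hγsc]; omega
  · omega
  · simp only [Pi.sub_apply]
    rw [sum_tsub_distrib s fun k _ => hγβ k, hγs]
    omega

lemma mem_closure_simplexSlab_of_le {s : Finset ι} {d b : ℕ} (hbd : b ≤ d) (m : ℕ)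
    {β : ι → ℕ} (hsum : ∑ k, β k = m * d) (hs : ∑ k ∈ s, β k ≤ m * b) :
    β ∈ AddSubmonoid.closure (simplexSlab s d b) := by
  induction m generalizing β with
  | zero =>
    rw [zero_mul, sum_eq_zero_iff] at hsum
    obtain rfl : β = 0 := funext fun k => hsum k (mem_univ k)
    exact zero_mem _
  | succ m ih =>
    obtain ⟨γ, hγ, hγβ, hrest⟩ := exists_simplexSlab_le hbd hsum hs
    have hrest_sum : ∑ k, (β - γ) k = m * d := by
      simp only [Pi.sub_apply]
      rw [sum_tsub_distrib _ fun k _ => hγβ k, hsum, hγ.1, add_mul, one_mul, Nat.add_sub_cancel]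
    rw [← tsub_add_cancel_of_le hγβ]
    exact add_mem (ih hrest_sum hrest) (AddSubmonoid.subset_closure hγ)

theorem mem_closure_simplexSlab {s : Finset ι} {d b : ℕ} (m : ℕ) {β : ι → ℕ}
    (hsum : ∑ k, β k = m * d) (hs : ∑ k ∈ s, β k ≤ m * b) :
    β ∈ AddSubmonoid.closure (simplexSlab s d b) := by
  have hmono : simplexSlab s d (min b d) ⊆ simplexSlab s d b :=
    fun γ hγ => ⟨hγ.1, hγ.2.trans (min_le_left b d)⟩
  refine AddSubmonoid.closure_mono hmono
    (mem_closure_simplexSlab_of_le (min_le_right b d) m hsum ?_)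
  rw [mul_min]
  exact le_min hs (hsum ▸ sum_le_univ_sum_of_nonneg fun _ => Nat.zero_le _)

end SimplexSlab

lemma card_filter_mem_Ico_fin {n t i : ℕ} (hit : i + t ≤ n) :
    #{m : Fin n | t ≤ m.val ∧ m.val < t + i} = i := by
  rw [← card_map Fin.valEmbedding]
  convert Nat.card_Ico t (t + i) using 2
  · ext x; simp [Fin.exists_iff]; omega
  · omega

theorem stmt17_general (n i t : ℕ) (hit : i + t ≤ n)
    (A : Set (Fin n → ℕ))
    (hA : A = {α | ∑ k, α k = n ∧
      ∑ k ∈ Finset.univ.filter (fun m : Fin n => t ≤ m.val ∧ m.val < t + i), α k ≤ i + 1})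
    (α : Fin n → ℕ) (hpos : ∀ k, 1 ≤ α k) (hdvd : n ∣ ∑ k, α k)
    (hineq : (Nat.gcd n (i + 1) : ℤ) ≤
      (i + 1 : ℤ) *
          ∑ k ∈ Finset.univ.filter (fun m : Fin n => ¬ (t ≤ m.val ∧ m.val < t + i)), (α k : ℤ)
        - ((n : ℤ) - i - 1) *
          ∑ k ∈ Finset.univ.filter (fun m : Fin n => t ≤ m.val ∧ m.val < t + i), (α k : ℤ)) :
    (fun k => α k - 1) ∈ AddSubmonoid.closure A := by
  subst hA
  set s := Finset.univ.filter (fun m : Fin n => t ≤ m.val ∧ m.val < t + i)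
  obtain ⟨m, hm⟩ := hdvd
  set s' := Finset.univ.filter (fun m : Fin n => ¬ (t ≤ m.val ∧ m.val < t + i))
  have hsplit : ∑ k ∈ s', (α k : ℤ) + ∑ k ∈ s, (α k : ℤ) = n * m := by
    exact_mod_cast (sum_filter_not_add_sum_filter univ _ α).trans hm
  have hs_lt : ∑ k ∈ s, α k < (i + 1) * m := by
    have hgcd : (0 : ℤ) < Nat.gcd n (i + 1) := mod_cast Nat.gcd_pos_of_pos_right n i.succ_pos
    have hweighted : 0 < (n : ℤ) * ((i + 1) * m - ∑ k ∈ s, (α k : ℤ)) := by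
      linear_combination hgcd + hineq + (i + 1 : ℤ) * hsplit
    exact_mod_cast sub_pos.mp (pos_of_mul_pos_right hweighted n.cast_nonneg)
  have hsub_one (u : Finset (Fin n)) : ∑ k ∈ u, (α k - 1) = ∑ k ∈ u, α k - #u := by
    rw [sum_tsub_distrib u fun k _ => hpos k, card_eq_sum_ones]
  refine mem_closure_simplexSlab (m - 1) ?_ ?_
  · rw [hsub_one, hm, card_univ, Fintype.card_fin, Nat.sub_one_mul, mul_comm]
  · rw [hsub_one, card_filter_mem_Ico_fin hit, Nat.sub_one_mul]
    rw [mul_comm] at hs_lt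
    omega

theorem stmt17 (n i t : ℕ) (hn : 3 ≤ n) (hi1 : 1 ≤ i) (hi2 : i ≤ n - 1)
    (ht : t ≤ n - 1) (hit : i + t ≤ n)
    (A : Set (Fin n → ℕ))
    (hA : A = {α | ∑ k, α k = n ∧
      ∑ k ∈ Finset.univ.filter (fun m : Fin n => t ≤ m.val ∧ m.val < t + i), α k ≤ i + 1})
    (α : Fin n → ℕ) (hpos : ∀ k, 1 ≤ α k) (hdvd : n ∣ ∑ k, α k)
    (hineq : (Nat.gcd n (i + 1) : ℤ) ≤
      (i + 1 : ℤ) *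
          ∑ k ∈ Finset.univ.filter (fun m : Fin n => ¬ (t ≤ m.val ∧ m.val < t + i)), (α k : ℤ)
        - ((n : ℤ) - i - 1) *
          ∑ k ∈ Finset.univ.filter (fun m : Fin n => t ≤ m.val ∧ m.val < t + i), (α k : ℤ)) :
    (fun k => α k - 1) ∈ AddSubmonoid.closure A :=
  stmt17_general n i t hit A hA α hpos hdvd hineq
end
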